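/- arXiv:1209.5660 — 6 statements merged into one kernel-verified Lean document; each statement's English description precedes it below -/
import Mathlib

section
/- If P is a set of filtered quadratic relations of PBW type for T/⟨P⟩ (i.e. ⟨π(P)⟩ = ⟨LH(⟨P⟩)⟩), then ⟨P⟩ ∩ F^1(T) = {0}. -/
/-- The `m`-th filtered component of a graded algebra. -/
def filt {k T : Type*} [CommSemiring k] [Ring T] [Algebra k T]
    (𝒜 : ℕ → Submodule k T) (m : ℕ) : Submodule k T :=
  ⨆ i ≤ m, 𝒜 i

/-- The leading homogeneous part of an element of a graded algebra. -/
noncomputable def LH {k T : Type*} [CommSemiring k] [Ring T] [Algebra k T]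
    (𝒜 : ℕ → Submodule k T) [GradedAlgebra 𝒜] (f : T) : T :=
  GradedAlgebra.proj 𝒜 (sSup {i | GradedAlgebra.proj 𝒜 i f ≠ 0}) f

/-- The two-sided ideal generated by a subset, as a `k`-submodule. -/
def twoSidedSpan (k : Type*) {T : Type*} [CommSemiring k] [Ring T] [Algebra k T]
    (P : Set T) : Submodule k T :=
  Submodule.span k {x | ∃ a b : T, ∃ p ∈ P, x = a * p * b}

/-!
The two-sided ideal generated by the homogeneous quadrics `π(P)` lives in degrees `≥ 2`. A nonzero
`x ∈ ⟨P⟩ ∩ F¹(T)` would have a nonzero leading part `LH x` of degree `≤ 1`, which lies in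
`⟨LH(⟨P⟩)⟩ = ⟨π(P)⟩`; this is impossible.
-/

section Semiring

variable {k T : Type*} [CommSemiring k] [Semiring T] [Algebra k T]
  (𝒜 : ℕ → Submodule k T) [GradedAlgebra 𝒜]

lemma proj_of_mem_same {d : ℕ} {x : T} (hx : x ∈ 𝒜 d) : GradedAlgebra.proj 𝒜 d x = x := by
  rw [GradedAlgebra.proj_apply, DirectSum.decompose_of_mem_same 𝒜 hx]

lemma proj_of_mem_ne {d i : ℕ} {x : T} (hx : x ∈ 𝒜 d) (hi : d ≠ i) :
    GradedAlgebra.proj 𝒜 i x = 0 := by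
  rw [GradedAlgebra.proj_apply, DirectSum.decompose_of_mem_ne 𝒜 hx hi]

lemma exists_proj_ne_zero {x : T} (hx : x ≠ 0) : ∃ i, GradedAlgebra.proj 𝒜 i x ≠ 0 := by
  by_contra! h
  refine hx ((DirectSum.decompose 𝒜).injective ?_)
  rw [DirectSum.decompose_zero]
  ext i
  simpa [GradedAlgebra.proj_apply] using h i

lemma proj_mul_mul_eq_zero_of_lt {n i : ℕ} {q : T} (hq : q ∈ 𝒜 n) (hi : i < n) (a b : T) :
    GradedAlgebra.proj 𝒜 i (a * q * b) = 0 := by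
  induction a using DirectSum.Decomposition.inductionOn 𝒜 generalizing b with
  | zero => simp
  | @homogeneous j a =>
    induction b using DirectSum.Decomposition.inductionOn 𝒜 with
    | zero => simp
    | @homogeneous l b =>
      exact proj_of_mem_ne 𝒜
        (SetLike.mul_mem_graded (SetLike.mul_mem_graded a.2 hq) b.2) (by omega)
    | add b₁ b₂ hb₁ hb₂ => rw [mul_add, map_add, hb₁, hb₂, add_zero]
  | add a₁ a₂ ha₁ ha₂ => rw [add_mul, add_mul, map_add, ha₁, ha₂, add_zero]

lemma image_proj_subset (n : ℕ) (P : Set T) :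
    (GradedAlgebra.proj 𝒜 n : T →ₗ[k] T) '' P ⊆ 𝒜 n := by
  rintro _ ⟨p, -, rfl⟩
  rw [GradedAlgebra.proj_apply]
  exact SetLike.coe_mem _

end Semiring

section Ring

variable {k T : Type*} [CommSemiring k] [Ring T] [Algebra k T]
  (𝒜 : ℕ → Submodule k T) [GradedAlgebra 𝒜]

lemma filt_le_ker_proj {m i : ℕ} (hi : m < i) :
    filt 𝒜 m ≤ LinearMap.ker (GradedAlgebra.proj 𝒜 i) :=
  iSup₂_le fun _ hj _ hy ↦ proj_of_mem_ne 𝒜 hy (by omega)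

lemma exists_le_LH_mem_and_ne_zero {m : ℕ} {x : T} (hx : x ∈ filt 𝒜 m) (hx0 : x ≠ 0) :
    ∃ d ≤ m, LH 𝒜 x ∈ 𝒜 d ∧ LH 𝒜 x ≠ 0 := by
  set S : Set ℕ := {i | GradedAlgebra.proj 𝒜 i x ≠ 0}
  have hS_le : ∀ i ∈ S, i ≤ m := fun i hi ↦ by
    by_contra! h
    exact hi (filt_le_ker_proj 𝒜 h hx)
  have hsup : sSup S ∈ S := Nat.sSup_mem (exists_proj_ne_zero 𝒜 hx0) ⟨m, hS_le⟩
  exact ⟨sSup S, hS_le _ hsup, SetLike.coe_mem _, hsup⟩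

lemma twoSidedSpan_le_ker_proj {n i : ℕ} {Q : Set T} (hQ : Q ⊆ 𝒜 n) (hi : i < n) :
    twoSidedSpan k Q ≤ LinearMap.ker (GradedAlgebra.proj 𝒜 i) :=
  Submodule.span_le.mpr <| by
    rintro _ ⟨a, b, q, hq, rfl⟩
    exact proj_mul_mul_eq_zero_of_lt 𝒜 (hQ hq) hi a b

lemma subset_twoSidedSpan (P : Set T) : P ⊆ twoSidedSpan k P :=
  fun p hp ↦ Submodule.subset_span ⟨1, 1, p, hp, by rw [one_mul, mul_one]⟩

end Ring

theorem stmt1_general {k T : Type*} [Field k] [Ring T] [Algebra k T]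
    (𝒜 : ℕ → Submodule k T) [GradedAlgebra 𝒜]
    (P : Set T)
    (hPBW : twoSidedSpan k ((GradedAlgebra.proj 𝒜 2 : T →ₗ[k] T) '' P) =
      twoSidedSpan k (LH 𝒜 '' (twoSidedSpan k P : Set T))) :
    twoSidedSpan k P ⊓ filt 𝒜 1 = ⊥ := by
  refine (Submodule.eq_bot_iff _).mpr fun x ⟨hxP, hx1⟩ ↦ ?_
  by_contra hx0
  obtain ⟨d, hd, hLH_mem, hLH_ne⟩ := exists_le_LH_mem_and_ne_zero 𝒜 hx1 hx0
  have hLH_span : LH 𝒜 x ∈ twoSidedSpan k ((GradedAlgebra.proj 𝒜 2 : T →ₗ[k] T) '' P) :=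
    hPBW ▸ subset_twoSidedSpan _ ⟨x, hxP, rfl⟩
  have hproj : GradedAlgebra.proj 𝒜 d (LH 𝒜 x) = 0 :=
    twoSidedSpan_le_ker_proj 𝒜 (image_proj_subset 𝒜 2 P) (by omega) hLH_span
  exact hLH_ne (proj_of_mem_same 𝒜 hLH_mem ▸ hproj)

/-- if `P ⊆ F²(T)` is of PBW type, i.e. `⟨π(P)⟩ = ⟨LH(⟨P⟩)⟩`, then
`⟨P⟩ ∩ F¹(T) = {0}`. -/
theorem stmt1 {k T : Type*} [Field k] [Ring T] [Algebra k T]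
    (𝒜 : ℕ → Submodule k T) [GradedAlgebra 𝒜]
    (P : Set T) (hP : P ⊆ (filt 𝒜 2 : Set T))
    (hPBW : twoSidedSpan k ((GradedAlgebra.proj 𝒜 2 : T →ₗ[k] T) '' P) =
      twoSidedSpan k (LH 𝒜 '' (twoSidedSpan k P : Set T))) :
    twoSidedSpan k P ⊓ filt 𝒜 1 = ⊥ :=
  stmt1_general 𝒜 P hPBW
end

section
/- Let V have basis {x,y} over k and let I be the ideal of T(V) generated by {xy - x, yx - y}. Then the degree-2 graded component of the associated graded algebra gr(T(V)/I) is zero, while the degree-2 component of T(V)/⟨xy, yx⟩ is 2-dimensional over k (with basis {x², y²}); hence T(V)/I is not of PBW type with respect to P = span{xy - x, yx - y}. -/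
/-! Modulo `I`, `x² ≡ (xy)x = x(yx) ≡ xy ≡ x` and symmetrically `y² ≡ y`, so every quadratic
monomial in `x, y` is congruent to a linear one and the degree-2 part of `gr(T(V)/I)` vanishes.
The algebra maps `T(V) → k` sending one basis vector to `1` and the other to `0` kill `xy` and
`yx`, hence `⟨xy, yx⟩`, and they separate `x²` from `y²`. The leading part of `x² - x ∈ I` is
`x²`, which the first of these maps does not kill, so `x² ∉ ⟨xy, yx⟩`. -/

section TwoSidedSpan

variable {k T : Type*} [CommSemiring k] [Ring T] [Algebra k T] {S : Set T}

theorem mul_mul_mem_twoSidedSpan {p : T} (hp : p ∈ S) (a c : T) :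
    a * p * c ∈ twoSidedSpan k S :=
  Submodule.subset_span ⟨a, c, p, hp, rfl⟩

theorem subset_twoSidedSpan_s5 : S ⊆ twoSidedSpan k S := fun p hp => by
  simpa using mul_mul_mem_twoSidedSpan (k := k) hp 1 1

theorem twoSidedSpan_le_ker {A : Type*} [Semiring A] [Algebra k A] (φ : T →ₐ[k] A)
    (h : ∀ p ∈ S, φ p = 0) : twoSidedSpan k S ≤ LinearMap.ker φ.toLinearMap := by
  rw [twoSidedSpan, Submodule.span_le]
  rintro _ ⟨a, c, p, hp, rfl⟩
  simp [h p hp]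

end TwoSidedSpan

section TwoSidedSpanRing

variable {k T : Type*} [CommRing k] [Ring T] [Algebra k T]

theorem mul_self_sub_mem_twoSidedSpan (x y : T) :
    x * x - x ∈ twoSidedSpan k {x * y - x, y * x - y} := by
  have hxy : x * y - x ∈ ({x * y - x, y * x - y} : Set T) := Set.mem_insert _ _
  have hyx : y * x - y ∈ ({x * y - x, y * x - y} : Set T) := Set.mem_insert_of_mem _ rfl
  have e : x * x - x = x * (y * x - y) * 1 + 1 * (x * y - x) * 1 - 1 * (x * y - x) * x := by
    noncomm_ring
  rw [e]
  exact sub_mem (add_mem (mul_mul_mem_twoSidedSpan hyx _ _) (mul_mul_mem_twoSidedSpan hxy _ _))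
    (mul_mul_mem_twoSidedSpan hxy _ _)

theorem mul_sub_left_mem_twoSidedSpan {x y v w : T} (hv : v ∈ ({x, y} : Set T))
    (hw : w ∈ ({x, y} : Set T)) : v * w - v ∈ twoSidedSpan k {x * y - x, y * x - y} := by
  rcases hv with rfl | rfl <;> rcases hw with rfl | rfl
  · exact mul_self_sub_mem_twoSidedSpan _ _
  · exact subset_twoSidedSpan_s5 (Set.mem_insert _ _)
  · exact subset_twoSidedSpan_s5 (Set.mem_insert_of_mem _ rfl)
  · rw [Set.pair_comm]
    exact mul_self_sub_mem_twoSidedSpan _ _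

end TwoSidedSpanRing

section Graded

variable {k T : Type*} [CommSemiring k] [Ring T] [Algebra k T] (𝒜 : ℕ → Submodule k T)

theorem le_filt {i m : ℕ} (h : i ≤ m) : 𝒜 i ≤ filt 𝒜 m :=
  le_iSup₂ (f := fun i (_ : i ≤ m) => 𝒜 i) i h

variable [GradedAlgebra 𝒜]

theorem GradedAlgebra.proj_of_mem {a : T} {m : ℕ} (ha : a ∈ 𝒜 m) (i : ℕ) :
    GradedAlgebra.proj 𝒜 i a = if m = i then a else 0 := by
  rw [GradedAlgebra.proj_apply]
  split_ifs with h
  · exact h ▸ DirectSum.decompose_of_mem_same 𝒜 ha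
  · exact DirectSum.decompose_of_mem_ne 𝒜 ha h

theorem LH_add_of_lt {a c : T} {m n : ℕ} (ha : a ∈ 𝒜 m) (ha0 : a ≠ 0) (hc : c ∈ 𝒜 n)
    (hnm : n < m) : LH 𝒜 (a + c) = a := by
  have hproj : ∀ i, GradedAlgebra.proj 𝒜 i (a + c) =
      (if m = i then a else 0) + if n = i then c else 0 := fun i => by
    rw [map_add, GradedAlgebra.proj_of_mem 𝒜 ha, GradedAlgebra.proj_of_mem 𝒜 hc]
  have hm : IsGreatest {i | GradedAlgebra.proj 𝒜 i (a + c) ≠ 0} m := by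
    refine ⟨by simpa [hproj, hnm.ne] using ha0, fun i hi => ?_⟩
    by_contra! hlt
    simp [hproj, hlt.ne, (hnm.trans hlt).ne] at hi
  rw [LH, hm.csSup_eq, hproj]
  simp [hnm.ne]

end Graded

theorem twoSidedSpan_ne_twoSidedSpan_LH {k T A : Type*} [CommRing k] [Ring T] [Algebra k T]
    (𝒜 : ℕ → Submodule k T) [GradedAlgebra 𝒜] [Semiring A] [Algebra k A] {x y : T}
    (hx : x ∈ 𝒜 1) (φ : T →ₐ[k] A) (hxy : φ (x * y) = 0) (hyx : φ (y * x) = 0)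
    (hxx : φ (x * x) ≠ 0) :
    twoSidedSpan k {x * y, y * x} ≠
      twoSidedSpan k (LH 𝒜 '' twoSidedSpan k {x * y - x, y * x - y}) := by
  intro h
  have hxx0 : x * x ≠ 0 := fun h0 => hxx (by rw [h0, map_zero])
  have hLH : LH 𝒜 (x * x + -x) = x * x :=
    LH_add_of_lt 𝒜 (SetLike.mul_mem_graded hx hx) hxx0 (neg_mem hx) one_lt_two
  have hmem : x * x ∈ twoSidedSpan k {x * y, y * x} := by
    rw [h]
    refine subset_twoSidedSpan_s5 ⟨x * x + -x, ?_, hLH⟩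
    simpa [← sub_eq_add_neg] using mul_self_sub_mem_twoSidedSpan (k := k) x y
  exact hxx (twoSidedSpan_le_ker φ (by rintro p (rfl | rfl) <;> assumption) hmem)

namespace TensorAlgebra

variable {k V : Type*} [CommRing k] [AddCommGroup V] [Module k V]

section Basis

variable {κ : Type*} (b : Module.Basis κ k V)

theorem range_ι_sq_le_iff {M : Submodule k (TensorAlgebra k V)} :
    LinearMap.range (ι k : V →ₗ[k] TensorAlgebra k V) ^ 2 ≤ M ↔
      ∀ i j, ι k (b i) * ι k (b j) ∈ M := by
  rw [LinearMap.range_eq_map, ← b.span_eq, Submodule.map_span, pow_two, Submodule.span_mul_span,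
    Submodule.span_le, Set.mul_subset_iff]
  simp

theorem linearIndependent_mkQ_ι_mul_self (J : Submodule k (TensorAlgebra k V))
    (hJ : ∀ i, J ≤ LinearMap.ker (lift k (b.coord i)).toLinearMap) :
    LinearIndependent k fun i => J.mkQ (ι k (b i) * ι k (b i)) := by
  classical
  let coords := LinearMap.pi fun i => (lift k (b.coord i)).toLinearMap
  have hcoords : J ≤ LinearMap.ker coords := by simpa [coords, LinearMap.ker_pi] using hJ
  refine .of_comp (J.liftQ coords hcoords) ?_
  have hsingle : ⇑(J.liftQ coords hcoords) ∘ (fun i => J.mkQ (ι k (b i) * ι k (b i))) =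
      fun i => Pi.single i 1 := by
    ext i j
    rcases eq_or_ne i j with rfl | h
    · simp [coords]
    · simp [coords, h.symm]
  exact hsingle ▸ Pi.linearIndependent_single_one κ k

end Basis

section Basis2

variable (b : Module.Basis (Fin 2) k V)

theorem range_ι_sq_le_sup_twoSidedSpan :
    LinearMap.range (ι k : V →ₗ[k] TensorAlgebra k V) ^ 2 ≤
      LinearMap.range (ι k : V →ₗ[k] TensorAlgebra k V) ⊔
        twoSidedSpan k {ι k (b 0) * ι k (b 1) - ι k (b 0), ι k (b 1) * ι k (b 0) - ι k (b 1)} := by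
  have hb : ∀ i, ι k (b i) ∈ ({ι k (b 0), ι k (b 1)} : Set _) := by
    intro i; fin_cases i <;> simp
  refine (range_ι_sq_le_iff b).2 fun i j => Submodule.mem_sup.2 ⟨_, LinearMap.mem_range_self _ _,
    _, mul_sub_left_mem_twoSidedSpan (hb i) (hb j), add_sub_cancel _ _⟩

theorem map_mkQ_range_ι_sq {J : Submodule k (TensorAlgebra k V)}
    (hxy : ι k (b 0) * ι k (b 1) ∈ J) (hyx : ι k (b 1) * ι k (b 0) ∈ J) :
    Submodule.map J.mkQ (LinearMap.range (ι k : V →ₗ[k] TensorAlgebra k V) ^ 2) =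
      Submodule.span k {J.mkQ (ι k (b 0) * ι k (b 0)), J.mkQ (ι k (b 1) * ι k (b 1))} := by
  refine le_antisymm (Submodule.map_le_iff_le_comap.2 ((range_ι_sq_le_iff b).2 ?_)) ?_
  · simp only [Fin.forall_fin_two, Submodule.mem_comap, Submodule.mkQ_apply,
      (Submodule.Quotient.mk_eq_zero J).2 hxy, (Submodule.Quotient.mk_eq_zero J).2 hyx]
    exact ⟨⟨Submodule.subset_span (Set.mem_insert _ _), zero_mem _⟩,
      zero_mem _, Submodule.subset_span (Set.mem_insert_of_mem _ rfl)⟩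
  · have hsq := (range_ι_sq_le_iff b).1 le_rfl
    rw [Submodule.span_le, Set.insert_subset_iff, Set.singleton_subset_iff]
    exact ⟨Submodule.mem_map_of_mem (hsq 0 0), Submodule.mem_map_of_mem (hsq 1 1)⟩

end Basis2

end TensorAlgebra

/-- for `I = ⟨xy - x, yx - y⟩` in `T(V)`, `V = span{x,y}`:
the degree-2 component of `gr(T(V)/I)` is zero (every degree-2 element is
congruent mod `I` to an element of filtered degree 1); the degree-2 component
of `T(V)/⟨xy, yx⟩` is 2-dimensional with basis the images of `x², y²`; hence
`T(V)/I` is not of PBW type with respect to `P = span{xy - x, yx - y}`,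
i.e. `⟨π(P)⟩ ≠ ⟨LH(I)⟩`. -/
theorem stmt5 {k V : Type*} [Field k] [AddCommGroup V] [Module k V]
    (b : Module.Basis (Fin 2) k V) :
    letI 𝒜 : ℕ → Submodule k (TensorAlgebra k V) :=
      fun n => LinearMap.range (TensorAlgebra.ι k : V →ₗ[k] TensorAlgebra k V) ^ n
    letI x : TensorAlgebra k V := TensorAlgebra.ι k (b 0)
    letI y : TensorAlgebra k V := TensorAlgebra.ι k (b 1)
    letI I := twoSidedSpan k {x * y - x, y * x - y}
    letI J := twoSidedSpan k {x * y, y * x}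
    (∀ w ∈ 𝒜 2, ∃ u ∈ filt 𝒜 1, w - u ∈ I) ∧
    (LinearIndependent k ![J.mkQ (x * x), J.mkQ (y * y)] ∧
      Submodule.map J.mkQ (𝒜 2) =
        Submodule.span k {J.mkQ (x * x), J.mkQ (y * y)}) ∧
    J ≠ twoSidedSpan k (LH 𝒜 '' (I : Set (TensorAlgebra k V))) := by
  set 𝒜 : ℕ → Submodule k (TensorAlgebra k V) :=
    fun n => LinearMap.range (TensorAlgebra.ι k : V →ₗ[k] TensorAlgebra k V) ^ n
  set x := TensorAlgebra.ι k (b 0)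
  set y := TensorAlgebra.ι k (b 1)
  set J := twoSidedSpan k {x * y, y * x}
  have hx : x ∈ 𝒜 1 := by simp [𝒜, x]
  have hJ : ∀ i, J ≤ LinearMap.ker (TensorAlgebra.lift k (b.coord i)).toLinearMap := fun i =>
    twoSidedSpan_le_ker _ (by fin_cases i <;> simp [x, y])
  refine ⟨fun w hw => ?_, ⟨?_, ?_⟩, ?_⟩
  · obtain ⟨u, hu, v, hv, rfl⟩ :=
      Submodule.mem_sup.1 (TensorAlgebra.range_ι_sq_le_sup_twoSidedSpan b hw)
    exact ⟨u, le_filt 𝒜 le_rfl (by simpa [𝒜] using hu), by rwa [add_sub_cancel_left]⟩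
  · have h := TensorAlgebra.linearIndependent_mkQ_ι_mul_self b J hJ
    rwa [show (fun i => J.mkQ (TensorAlgebra.ι k (b i) * TensorAlgebra.ι k (b i))) =
      ![J.mkQ (x * x), J.mkQ (y * y)] by ext i; fin_cases i <;> rfl] at h
  · exact TensorAlgebra.map_mkQ_range_ι_sq b (subset_twoSidedSpan_s5 (Set.mem_insert _ _))
      (subset_twoSidedSpan_s5 (Set.mem_insert_of_mem _ rfl))
  · exact twoSidedSpan_ne_twoSidedSpan_LH 𝒜 hx (TensorAlgebra.lift k (b.coord 0))
      (by simp [x, y]) (by simp [x, y]) (by simp [x])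
end

section
/- Let G act on a k-algebra S by automorphisms and let A = S#G be the skew group algebra. The formula (a ⊗ x) · s = a(g·s) ⊗ x, for a ∈ A, x in the g-component (C_i)_g, and s ∈ S, combined with the right kG-action, gives A ⊗_{kG} C_i a well-defined A-bimodule structure extending its left A-module and right kG-module structures, provided C_i is G-graded with g((C_i)_h)ℓ = (C_i)_{ghℓ}. -/
open TensorProduct

/-- A presentation of `A` as the skew group algebra `S#G` for the action
`act` of `G` on `S`: embeddings of `S` and `G`, the skew commutation relation
`g·s = (g•s)·g`, and the fact that `A` is free as a left `S`-module on the
image of `G` (equivalently, `A ≅ S ⊗ kG` as a vector space via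
`s ⊗ g ↦ ιS s · ιG g`). -/
structure SkewPresentation (k S G A : Type*) [CommSemiring k] [Ring S] [Algebra k S]
    [Group G] [Ring A] [Algebra k A] (act : G →* S ≃ₐ[k] S) where
  ιS : S →ₐ[k] A
  ιG : G →* Aˣ
  comm : ∀ (g : G) (s : S), (ιG g : A) * ιS s = ιS (act g s) * (ιG g : A)
  bij : Function.Bijective fun f : G →₀ S => f.sum fun g s => ιS s * (ιG g : A)

namespace S10
set_option linter.unusedSectionVars false

variable {k S G A C : Type*} [Field k] [Ring S] [Algebra k S]
  [Group G] [Fintype G] [DecidableEq G] [Ring A] [Algebra k A]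
  [AddCommGroup C] [Module k C]

section Pi

variable (𝒞 : G → Submodule k C) (hint : DirectSum.IsInternal 𝒞)

/-- Projection onto the `g`-th graded piece. -/
noncomputable def pi (g : G) : C →ₗ[k] C :=
  (𝒞 g).subtype ∘ₗ (DirectSum.component k G (fun g => ↥(𝒞 g)) g) ∘ₗ
    (LinearEquiv.ofBijective (DirectSum.coeLinearMap 𝒞) hint).symm.toLinearMap

lemma pi_mem (g : G) (x : C) : pi 𝒞 hint g x ∈ 𝒞 g := Submodule.coe_mem _

lemma pi_apply_of_mem {g : G} {x : C} (hx : x ∈ 𝒞 g) : pi 𝒞 hint g x = x := by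
  show (((LinearEquiv.ofBijective (DirectSum.coeLinearMap 𝒞) hint).symm x) g : C) = x
  rw [hint.ofBijective_coeLinearMap_of_mem hx]

lemma pi_apply_of_mem_ne {g h : G} {x : C} (hx : x ∈ 𝒞 g) (hne : g ≠ h) :
    pi 𝒞 hint h x = 0 := by
  show (((LinearEquiv.ofBijective (DirectSum.coeLinearMap 𝒞) hint).symm x) h : C) = 0
  rw [hint.ofBijective_coeLinearMap_of_mem_ne hne hx]
  rfl

lemma sum_pi (x : C) : ∑ g : G, pi 𝒞 hint g x = x := by
  set e := LinearEquiv.ofBijective (DirectSum.coeLinearMap 𝒞) hint with he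
  have h1 : ∑ g : G, DirectSum.of (fun g => ↥(𝒞 g)) g ((e.symm x) g) = e.symm x :=
    DirectSum.sum_univ_of _
  calc ∑ g : G, pi 𝒞 hint g x
      = ∑ g : G, DirectSum.coeLinearMap 𝒞 (DirectSum.of (fun g => ↥(𝒞 g)) g ((e.symm x) g)) := by
        refine Finset.sum_congr rfl fun g _ => ?_
        rw [DirectSum.coeLinearMap_of]
        rfl
    _ = DirectSum.coeLinearMap 𝒞 (∑ g : G, DirectSum.of (fun g => ↥(𝒞 g)) g ((e.symm x) g)) :=
        (map_sum _ _ _).symm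
    _ = x := by rw [h1]; exact e.apply_symm_apply x

include hint in
/-- An extensionality principle: two linear maps out of `A ⊗ C` agree if they agree
on pure tensors with homogeneous second factor. -/
lemma tensor_ext {M : Type*} [AddCommGroup M] [Module k M] {F F' : A ⊗[k] C →ₗ[k] M}
    (h : ∀ (a : A) (g : G) (x : C), x ∈ 𝒞 g → F (a ⊗ₜ[k] x) = F' (a ⊗ₜ[k] x)) : F = F' := by
  apply TensorProduct.ext'
  intro a x
  rw [← sum_pi 𝒞 hint x, tmul_sum, map_sum, map_sum]
  exact Finset.sum_congr rfl fun g _ => h a g _ (pi_mem 𝒞 hint g x)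

end Pi

variable (act : G →* S ≃ₐ[k] S) (pres : SkewPresentation k S G A act)
  (lact ract : G → C →ₗ[k] C)
  (𝒞 : G → Submodule k C) (hint : DirectSum.IsInternal 𝒞)

/-- The right action of `s : S` on `A ⊗ C`. -/
noncomputable def P (s : S) : A ⊗[k] C →ₗ[k] A ⊗[k] C :=
  ∑ g : G, TensorProduct.map (LinearMap.mulRight k (pres.ιS (act g s) : A)) (pi 𝒞 hint g)

/-- The right action of `h : G` on `A ⊗ C`. -/
noncomputable def Q (h : G) : A ⊗[k] C →ₗ[k] A ⊗[k] C :=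
  LinearMap.lTensor A (ract h)

/-- The left action of `a : A` on `A ⊗ C`. -/
noncomputable def L (a : A) : A ⊗[k] C →ₗ[k] A ⊗[k] C :=
  LinearMap.rTensor C (LinearMap.mulLeft k a)

lemma P_tmul (s : S) (a : A) (x : C) :
    P act pres 𝒞 hint s (a ⊗ₜ[k] x) = ∑ g : G, (a * pres.ιS (act g s)) ⊗ₜ[k] pi 𝒞 hint g x := by
  simp [P, LinearMap.sum_apply, TensorProduct.map_tmul]

lemma P_tmul_of_mem (s : S) (a : A) {h : G} {x : C} (hx : x ∈ 𝒞 h) :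
    P act pres 𝒞 hint s (a ⊗ₜ[k] x) = (a * pres.ιS (act h s)) ⊗ₜ[k] x := by
  rw [P_tmul]
  rw [Finset.sum_eq_single h]
  · rw [pi_apply_of_mem 𝒞 hint hx]
  · intro g _ hg
    rw [pi_apply_of_mem_ne 𝒞 hint hx (Ne.symm hg), tmul_zero]
  · intro habs
    exact absurd (Finset.mem_univ h) habs

lemma Q_tmul (h : G) (a : A) (x : C) :
    Q (C := C) (k := k) (A := A) ract h (a ⊗ₜ[k] x) = a ⊗ₜ[k] ract h x := rfl

lemma L_tmul (a b : A) (x : C) :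
    L (C := C) (k := k) a (b ⊗ₜ[k] x) = (a * b) ⊗ₜ[k] x := rfl

/-- The defining generators of the middle-`kG` relations. -/
def Ngen : Set (A ⊗[k] C) := {z | ∃ (a : A) (g : G) (x : C),
    z = (a * (pres.ιG g : A)) ⊗ₜ[k] x - a ⊗ₜ[k] lact g x}

/-- The submodule of middle-`kG` relations. -/
noncomputable def NN : Submodule k (A ⊗[k] C) := Submodule.span k (Ngen act pres lact)

lemma L_descends (a : A) : NN act pres lact ≤ (NN act pres lact).comap (L (k := k) (C := C) a) := by
  rw [NN, Submodule.span_le]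
  rintro z ⟨b, g, x, rfl⟩
  simp only [SetLike.mem_coe, Submodule.mem_comap]
  rw [map_sub, L_tmul, L_tmul]
  exact Submodule.subset_span ⟨a * b, g, x, by rw [mul_assoc]⟩

lemma Q_descends (hlr : ∀ (g h : G) (x : C), lact g (ract h x) = ract h (lact g x)) (h : G) :
    NN act pres lact ≤ (NN act pres lact).comap (Q (k := k) (A := A) ract h) := by
  rw [NN, Submodule.span_le]
  rintro z ⟨b, g, x, rfl⟩
  simp only [SetLike.mem_coe, Submodule.mem_comap]
  rw [map_sub, Q_tmul, Q_tmul]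
  exact Submodule.subset_span ⟨b, g, ract h x, by rw [hlr]⟩

lemma act_act (g h : G) (s : S) : act g (act h s) = act (g * h) s := by
  rw [map_mul, AlgEquiv.mul_apply]

lemma P_descends (hr1 : ract 1 = LinearMap.id)
    (hgr : ∀ (g h ℓ : G), ∀ x ∈ 𝒞 h, lact g (ract ℓ x) ∈ 𝒞 (g * h * ℓ)) (s : S) :
    NN act pres lact ≤ (NN act pres lact).comap (P act pres 𝒞 hint s) := by
  rw [NN, Submodule.span_le]
  rintro z ⟨b, g, x, rfl⟩
  simp only [SetLike.mem_coe, Submodule.mem_comap]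
  rw [map_sub]
  have hmem : ∀ h : G, lact g (pi 𝒞 hint h x) ∈ 𝒞 (g * h) := by
    intro h
    have := hgr g h 1 _ (pi_mem 𝒞 hint h x)
    simpa [hr1] using this
  have e2 : P act pres 𝒞 hint s (b ⊗ₜ[k] lact g x)
      = ∑ h : G, (b * pres.ιS (act (g * h) s)) ⊗ₜ[k] lact g (pi 𝒞 hint h x) := by
    conv_lhs => rw [← sum_pi 𝒞 hint x, map_sum, tmul_sum, map_sum]
    exact Finset.sum_congr rfl fun h _ => P_tmul_of_mem act pres 𝒞 hint s b (hmem h)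
  rw [P_tmul, e2, ← Finset.sum_sub_distrib]
  refine Submodule.sum_mem _ fun h _ => ?_
  have key : (b * (pres.ιG g : A)) * pres.ιS (act h s)
      = (b * pres.ιS (act (g * h) s)) * (pres.ιG g : A) := by
    rw [mul_assoc, pres.comm g (act h s), act_act, ← mul_assoc]
  rw [key]
  exact Submodule.subset_span ⟨b * pres.ιS (act (g * h) s), g, pi 𝒞 hint h x, rfl⟩

lemma relP1 : P act pres 𝒞 hint 1 = LinearMap.id := by
  refine tensor_ext 𝒞 hint fun a g x hx => ?_
  rw [P_tmul_of_mem act pres 𝒞 hint 1 a hx]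
  simp

lemma relPP (s t : S) :
    P act pres 𝒞 hint t ∘ₗ P act pres 𝒞 hint s = P act pres 𝒞 hint (s * t) := by
  refine tensor_ext 𝒞 hint fun a g x hx => ?_
  rw [LinearMap.comp_apply, P_tmul_of_mem act pres 𝒞 hint s a hx,
    P_tmul_of_mem act pres 𝒞 hint t _ hx, P_tmul_of_mem act pres 𝒞 hint (s*t) a hx,
    map_mul (act g), map_mul pres.ιS, mul_assoc]

lemma relQQ (hrmul : ∀ g h, ract (g * h) = ract h ∘ₗ ract g) (g h : G) :
    Q (k := k) (A := A) ract g ∘ₗ Q (k := k) (A := A) ract h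
      = Q (k := k) (A := A) ract (h * g) := by
  unfold Q
  rw [hrmul h g, LinearMap.lTensor_comp]

lemma relQ1 (hr1 : ract 1 = LinearMap.id) : Q (k := k) (A := A) (C := C) ract 1 = LinearMap.id := by
  unfold Q
  rw [hr1, LinearMap.lTensor_id]

lemma ract_mem (hl1 : lact 1 = LinearMap.id)
    (hgr : ∀ (g h ℓ : G), ∀ x ∈ 𝒞 h, lact g (ract ℓ x) ∈ 𝒞 (g * h * ℓ))
    (g h : G) {x : C} (hx : x ∈ 𝒞 h) : ract g x ∈ 𝒞 (h * g) := by
  have := hgr 1 h g x hx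
  simpa [hl1] using this

lemma relPQ (hl1 : lact 1 = LinearMap.id)
    (hgr : ∀ (g h ℓ : G), ∀ x ∈ 𝒞 h, lact g (ract ℓ x) ∈ 𝒞 (g * h * ℓ))
    (g : G) (t : S) :
    P act pres 𝒞 hint t ∘ₗ Q (k := k) (A := A) ract g
      = Q (k := k) (A := A) ract g ∘ₗ P act pres 𝒞 hint (act g t) := by
  refine tensor_ext 𝒞 hint fun a h x hx => ?_
  rw [LinearMap.comp_apply, LinearMap.comp_apply, Q_tmul,
    P_tmul_of_mem act pres 𝒞 hint t a (ract_mem lact ract 𝒞 hl1 hgr g h hx),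
    P_tmul_of_mem act pres 𝒞 hint (act g t) a hx, Q_tmul, act_act]

section Quot

variable (hl1 : lact 1 = LinearMap.id)
  (hr1 : ract 1 = LinearMap.id)
  (hrmul : ∀ g h, ract (g * h) = ract h ∘ₗ ract g)
  (hlr : ∀ (g h : G) (x : C), lact g (ract h x) = ract h (lact g x))
  (hgr : ∀ (g h ℓ : G), ∀ x ∈ 𝒞 h, lact g (ract ℓ x) ∈ 𝒞 (g * h * ℓ))

/-- Right action of `S` on the quotient. -/
noncomputable def Pb (s : S) : Module.End k ((A ⊗[k] C) ⧸ NN act pres lact) :=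
  Submodule.mapQ _ _ (P act pres 𝒞 hint s) (P_descends act pres lact ract 𝒞 hint hr1 hgr s)

/-- Right action of `G` on the quotient. -/
noncomputable def Qb (h : G) : Module.End k ((A ⊗[k] C) ⧸ NN act pres lact) :=
  Submodule.mapQ _ _ (Q (k := k) (A := A) ract h) (Q_descends act pres lact ract hlr h)

/-- Left action of `A` on the quotient. -/
noncomputable def Lb (a : A) : Module.End k ((A ⊗[k] C) ⧸ NN act pres lact) :=
  Submodule.mapQ _ _ (L (k := k) (C := C) a) (L_descends act pres lact a)

lemma Pb_mk (s : S) (z : A ⊗[k] C) :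
    Pb act pres lact ract 𝒞 hint hr1 hgr s ((NN act pres lact).mkQ z)
      = (NN act pres lact).mkQ (P act pres 𝒞 hint s z) := by
  simp [Pb, Submodule.mapQ_apply]

lemma Qb_mk (h : G) (z : A ⊗[k] C) :
    Qb act pres lact ract hlr h ((NN act pres lact).mkQ z)
      = (NN act pres lact).mkQ (Q (k := k) (A := A) ract h z) := by
  simp [Qb, Submodule.mapQ_apply]

lemma Lb_mk (a : A) (z : A ⊗[k] C) :
    Lb act pres lact a ((NN act pres lact).mkQ z)
      = (NN act pres lact).mkQ (L (k := k) (C := C) a z) := by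
  simp [Lb, Submodule.mapQ_apply]

lemma relbPP (s t : S) :
    Pb act pres lact ract 𝒞 hint hr1 hgr t * Pb act pres lact ract 𝒞 hint hr1 hgr s
      = Pb act pres lact ract 𝒞 hint hr1 hgr (s * t) := by
  refine Submodule.linearMap_qext _ (LinearMap.ext fun z => ?_)
  simp only [LinearMap.comp_apply, Submodule.mkQ_apply, Module.End.mul_apply, Pb,
    Submodule.mapQ_apply]
  rw [← LinearMap.comp_apply (P act pres 𝒞 hint t), relPP]

include hrmul in
lemma relbQQ (g h : G) :
    Qb act pres lact ract hlr g * Qb act pres lact ract hlr h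
      = Qb act pres lact ract hlr (h * g) := by
  refine Submodule.linearMap_qext _ (LinearMap.ext fun z => ?_)
  simp only [LinearMap.comp_apply, Submodule.mkQ_apply, Module.End.mul_apply, Qb,
    Submodule.mapQ_apply]
  rw [← LinearMap.comp_apply (Q (k := k) (A := A) ract g), relQQ ract hrmul]

include hl1 in
lemma relbPQ (g : G) (t : S) :
    Pb act pres lact ract 𝒞 hint hr1 hgr t * Qb act pres lact ract hlr g
      = Qb act pres lact ract hlr g * Pb act pres lact ract 𝒞 hint hr1 hgr (act g t) := by
  refine Submodule.linearMap_qext _ (LinearMap.ext fun z => ?_)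
  simp only [LinearMap.comp_apply, Submodule.mkQ_apply, Module.End.mul_apply, Pb, Qb,
    Submodule.mapQ_apply]
  rw [← LinearMap.comp_apply (P act pres 𝒞 hint t), relPQ act pres lact ract 𝒞 hint hl1 hgr]
  rfl

lemma relbP1 : Pb act pres lact ract 𝒞 hint hr1 hgr 1 = 1 := by
  refine Submodule.linearMap_qext _ (LinearMap.ext fun z => ?_)
  simp only [LinearMap.comp_apply, Submodule.mkQ_apply, Pb, Submodule.mapQ_apply,
    Module.End.one_apply, relP1]
  rfl

include hr1 in
lemma relbQ1 : Qb act pres lact ract hlr 1 = 1 := by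
  refine Submodule.linearMap_qext _ (LinearMap.ext fun z => ?_)
  simp only [LinearMap.comp_apply, Submodule.mkQ_apply, Qb, Submodule.mapQ_apply,
    Module.End.one_apply, relQ1 (k := k) (A := A) (C := C) ract hr1]
  rfl

lemma mulRight_add' (a b : A) : LinearMap.mulRight k (a + b)
    = LinearMap.mulRight k a + LinearMap.mulRight k b :=
  LinearMap.ext fun x => mul_add x a b

lemma mulRight_smul' (c : k) (a : A) : LinearMap.mulRight k (c • a)
    = c • LinearMap.mulRight k a :=
  LinearMap.ext fun x => mul_smul_comm c x a

lemma P_add (s t : S) : P act pres 𝒞 hint (s + t)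
    = P act pres 𝒞 hint s + P act pres 𝒞 hint t := by
  unfold P
  rw [← Finset.sum_add_distrib]
  refine Finset.sum_congr rfl fun g _ => ?_
  rw [map_add (act g), map_add pres.ιS, mulRight_add', TensorProduct.map_add_left]

lemma P_smul (c : k) (s : S) : P act pres 𝒞 hint (c • s) = c • P act pres 𝒞 hint s := by
  unfold P
  rw [Finset.smul_sum]
  refine Finset.sum_congr rfl fun g _ => ?_
  rw [map_smul (act g), map_smul pres.ιS, mulRight_smul',
    TensorProduct.map_smul_left]

/-- The right `S`-action, bundled as a linear map. -/
noncomputable def Pl : S →ₗ[k] Module.End k ((A ⊗[k] C) ⧸ NN act pres lact) where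
  toFun s := Pb act pres lact ract 𝒞 hint hr1 hgr s
  map_add' s t := by
    refine Submodule.linearMap_qext _ (LinearMap.ext fun z => ?_)
    simp only [LinearMap.comp_apply, Submodule.mkQ_apply, Pb, Submodule.mapQ_apply,
      LinearMap.add_apply, P_add, map_add, Submodule.Quotient.mk_add]
  map_smul' c s := by
    refine Submodule.linearMap_qext _ (LinearMap.ext fun z => ?_)
    simp only [LinearMap.comp_apply, Submodule.mkQ_apply, Pb, Submodule.mapQ_apply,
      LinearMap.smul_apply, P_smul, map_smul, RingHom.id_apply, Submodule.Quotient.mk_smul]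

/-- The linear isomorphism `(G →₀ S) ≃ A`. -/
noncomputable def Phi : (G →₀ S) ≃ₗ[k] A :=
  LinearEquiv.ofBijective
    (Finsupp.lsum (R := k) k fun g =>
      (LinearMap.mulRight k ((pres.ιG g : Aˣ) : A)) ∘ₗ pres.ιS.toLinearMap)
    (by
      have h : ⇑(Finsupp.lsum (R := k) (M := S) (N := A) k fun g =>
          (LinearMap.mulRight k ((pres.ιG g : Aˣ) : A)) ∘ₗ pres.ιS.toLinearMap)
          = fun f : G →₀ S => f.sum fun g s => pres.ιS s * (pres.ιG g : A) := rfl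
      rw [h]
      exact pres.bij)

/-- The right `A`-action. -/
noncomputable def rho : A →ₗ[k] Module.End k ((A ⊗[k] C) ⧸ NN act pres lact) :=
  (Finsupp.lsum (R := k) k fun g =>
      (LinearMap.mulLeft k (Qb act pres lact ract hlr g)) ∘ₗ
        Pl act pres lact ract 𝒞 hint hr1 hgr)
    ∘ₗ (Phi act pres).symm.toLinearMap

lemma rho_gen (s : S) (g : G) :
    rho act pres lact ract 𝒞 hint hr1 hlr hgr (pres.ιS s * (pres.ιG g : A))
      = Qb act pres lact ract hlr g * Pb act pres lact ract 𝒞 hint hr1 hgr s := by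
  have h2 : (Phi act pres) (Finsupp.single g s) = pres.ιS s * (pres.ιG g : A) := by
    simp [Phi, LinearEquiv.ofBijective_apply, Finsupp.lsum_single]
  have h1 : (Phi act pres).symm (pres.ιS s * (pres.ιG g : A)) = Finsupp.single g s := by
    rw [LinearEquiv.symm_apply_eq, h2]
  unfold rho
  rw [LinearMap.comp_apply]
  rw [show ((Phi act pres).symm.toLinearMap (pres.ιS s * (pres.ιG g : A)))
    = Finsupp.single g s from h1]
  rw [Finsupp.lsum_single]
  rfl

lemma span_top (a : A) :
    a ∈ Submodule.span k {z : A | ∃ (s : S) (g : G), z = pres.ιS s * (pres.ιG g : A)} := by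
  obtain ⟨f, rfl⟩ := pres.bij.2 a
  dsimp only
  rw [Finsupp.sum]
  exact Submodule.sum_mem _ fun g _ => Submodule.subset_span ⟨f g, g, rfl⟩

lemma rho_one : rho act pres lact ract 𝒞 hint hr1 hlr hgr 1 = 1 := by
  have h : (1 : A) = pres.ιS 1 * (pres.ιG 1 : A) := by simp
  rw [h, rho_gen, relbP1, relbQ1 act pres lact ract hr1 hlr, one_mul]

include hl1 hrmul in
lemma rho_mul_gen (s : S) (g : G) (t : S) (h : G) :
    rho act pres lact ract 𝒞 hint hr1 hlr hgr
        ((pres.ιS s * (pres.ιG g : A)) * (pres.ιS t * (pres.ιG h : A)))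
      = rho act pres lact ract 𝒞 hint hr1 hlr hgr (pres.ιS t * (pres.ιG h : A))
        * rho act pres lact ract 𝒞 hint hr1 hlr hgr (pres.ιS s * (pres.ιG g : A)) := by
  have hprod : (pres.ιS s * (pres.ιG g : A)) * (pres.ιS t * (pres.ιG h : A))
      = pres.ιS (s * act g t) * ((pres.ιG (g * h) : Aˣ) : A) := by
    rw [map_mul pres.ιG, Units.val_mul, map_mul pres.ιS,
      mul_assoc (pres.ιS s) ((pres.ιG g : A)) (pres.ιS t * (pres.ιG h : A)),
      ← mul_assoc ((pres.ιG g : A)) (pres.ιS t) ((pres.ιG h : A)),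
      pres.comm g t,
      mul_assoc (pres.ιS (act g t)) ((pres.ιG g : A)) ((pres.ιG h : A)),
      ← mul_assoc (pres.ιS s) (pres.ιS (act g t)) _]
  rw [hprod, rho_gen, rho_gen, rho_gen]
  symm
  calc (Qb act pres lact ract hlr h * Pb act pres lact ract 𝒞 hint hr1 hgr t)
        * (Qb act pres lact ract hlr g * Pb act pres lact ract 𝒞 hint hr1 hgr s)
      = Qb act pres lact ract hlr h
          * ((Pb act pres lact ract 𝒞 hint hr1 hgr t * Qb act pres lact ract hlr g)
            * Pb act pres lact ract 𝒞 hint hr1 hgr s) := by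
        rw [mul_assoc, ← mul_assoc (Pb act pres lact ract 𝒞 hint hr1 hgr t)]
    _ = Qb act pres lact ract hlr h
          * ((Qb act pres lact ract hlr g
              * Pb act pres lact ract 𝒞 hint hr1 hgr (act g t))
            * Pb act pres lact ract 𝒞 hint hr1 hgr s) := by
        rw [relbPQ act pres lact ract 𝒞 hint hl1 hr1 hlr hgr]
    _ = (Qb act pres lact ract hlr h * Qb act pres lact ract hlr g)
          * (Pb act pres lact ract 𝒞 hint hr1 hgr (act g t)
            * Pb act pres lact ract 𝒞 hint hr1 hgr s) := by
        rw [mul_assoc (Qb act pres lact ract hlr g), ← mul_assoc, ← mul_assoc]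
    _ = Qb act pres lact ract hlr (g * h)
          * Pb act pres lact ract 𝒞 hint hr1 hgr (s * act g t) := by
        rw [relbQQ act pres lact ract hrmul hlr, relbPP]

end Quot

section Main

variable (hl1 : lact 1 = LinearMap.id)
  (hr1 : ract 1 = LinearMap.id)
  (hrmul : ∀ g h, ract (g * h) = ract h ∘ₗ ract g)
  (hlr : ∀ (g h : G) (x : C), lact g (ract h x) = ract h (lact g x))
  (hgr : ∀ (g h ℓ : G), ∀ x ∈ 𝒞 h, lact g (ract ℓ x) ∈ 𝒞 (g * h * ℓ))

/-- The left `A`-action as a linear map. -/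
noncomputable def Llin : A →ₗ[k] Module.End k ((A ⊗[k] C) ⧸ NN act pres lact) where
  toFun a := Lb act pres lact a
  map_add' a b := by
    refine Submodule.linearMap_qext _ (TensorProduct.ext' fun c x => ?_)
    simp only [LinearMap.comp_apply, Submodule.mkQ_apply, Lb, Submodule.mapQ_apply,
      LinearMap.add_apply, L, LinearMap.rTensor_tmul, LinearMap.mulLeft_apply, add_mul,
      TensorProduct.add_tmul, Submodule.Quotient.mk_add]
  map_smul' c a := by
    refine Submodule.linearMap_qext _ (TensorProduct.ext' fun b x => ?_)
    simp only [LinearMap.comp_apply, Submodule.mkQ_apply, Lb, Submodule.mapQ_apply,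
      LinearMap.smul_apply, L, LinearMap.rTensor_tmul, LinearMap.mulLeft_apply,
      smul_mul_assoc, RingHom.id_apply]
    rw [← TensorProduct.smul_tmul', Submodule.Quotient.mk_smul]

lemma Llin_apply (a : A) : Llin act pres lact a = Lb act pres lact a := rfl

/-- The left `A`-action as an algebra map. -/
noncomputable def Lhom : A →ₐ[k] Module.End k ((A ⊗[k] C) ⧸ NN act pres lact) :=
  AlgHom.ofLinearMap (Llin act pres lact)
    (by
      refine Submodule.linearMap_qext _ (TensorProduct.ext' fun b x => ?_)
      simp only [LinearMap.comp_apply, Submodule.mkQ_apply, Llin_apply, Lb,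
        Submodule.mapQ_apply, L, LinearMap.rTensor_tmul, LinearMap.mulLeft_apply, one_mul,
        Module.End.one_apply])
    (fun a b => by
      refine Submodule.linearMap_qext _ (TensorProduct.ext' fun c x => ?_)
      simp only [LinearMap.comp_apply, Submodule.mkQ_apply, Module.End.mul_apply, Llin_apply,
        Lb, Submodule.mapQ_apply, L, LinearMap.rTensor_tmul, LinearMap.mulLeft_apply,
        mul_assoc])

lemma Lhom_apply (a : A) : Lhom act pres lact a = Lb act pres lact a := rfl

include hlr in
lemma LQ_comm (a : A) (h : G) :
    Lb act pres lact a * Qb act pres lact ract hlr h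
      = Qb act pres lact ract hlr h * Lb act pres lact a := by
  refine Submodule.linearMap_qext _ (TensorProduct.ext' fun b x => ?_)
  simp only [LinearMap.comp_apply, Submodule.mkQ_apply, Module.End.mul_apply, Lb, Qb,
    Submodule.mapQ_apply, L, Q, LinearMap.rTensor_tmul, LinearMap.lTensor_tmul,
    LinearMap.mulLeft_apply]

include hr1 hgr in
lemma LP_comm (a : A) (s : S) :
    Lb act pres lact a * Pb act pres lact ract 𝒞 hint hr1 hgr s
      = Pb act pres lact ract 𝒞 hint hr1 hgr s * Lb act pres lact a := by
  refine Submodule.linearMap_qext _ ?_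
  refine tensor_ext 𝒞 hint fun b g x hx => ?_
  simp only [LinearMap.comp_apply, Submodule.mkQ_apply, Module.End.mul_apply, Lb, Pb,
    Submodule.mapQ_apply]
  rw [P_tmul_of_mem act pres 𝒞 hint s b hx,
    show L (k := k) (C := C) a (b ⊗ₜ[k] x) = (a * b) ⊗ₜ[k] x from rfl,
    show L (k := k) (C := C) a ((b * pres.ιS (act g s)) ⊗ₜ[k] x)
      = (a * (b * pres.ιS (act g s))) ⊗ₜ[k] x from rfl,
    P_tmul_of_mem act pres 𝒞 hint s (a * b) hx, mul_assoc]

include hr1 hlr hgr in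
lemma L_rho_comm (a b : A) :
    Lhom act pres lact a * rho act pres lact ract 𝒞 hint hr1 hlr hgr b
      = rho act pres lact ract 𝒞 hint hr1 hlr hgr b * Lhom act pres lact a := by
  have main : ∀ b', b' ∈ Submodule.span k
      {z : A | ∃ (s : S) (g : G), z = pres.ιS s * (pres.ιG g : A)} →
      Lhom act pres lact a * rho act pres lact ract 𝒞 hint hr1 hlr hgr b'
        = rho act pres lact ract 𝒞 hint hr1 hlr hgr b' * Lhom act pres lact a := by
    intro b' hb
    induction hb using Submodule.span_induction with
    | mem y hy =>
      obtain ⟨t, h, rfl⟩ := hy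
      rw [rho_gen act pres lact ract 𝒞 hint hr1 hlr hgr, Lhom_apply]
      calc Lb act pres lact a
            * (Qb act pres lact ract hlr h * Pb act pres lact ract 𝒞 hint hr1 hgr t)
          = (Lb act pres lact a * Qb act pres lact ract hlr h)
            * Pb act pres lact ract 𝒞 hint hr1 hgr t := (mul_assoc _ _ _).symm
        _ = (Qb act pres lact ract hlr h * Lb act pres lact a)
            * Pb act pres lact ract 𝒞 hint hr1 hgr t := by
              rw [LQ_comm act pres lact ract hlr]
        _ = Qb act pres lact ract hlr h
            * (Lb act pres lact a * Pb act pres lact ract 𝒞 hint hr1 hgr t) :=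
              mul_assoc _ _ _
        _ = Qb act pres lact ract hlr h
            * (Pb act pres lact ract 𝒞 hint hr1 hgr t * Lb act pres lact a) := by
              rw [LP_comm act pres lact ract 𝒞 hint hr1 hgr]
        _ = (Qb act pres lact ract hlr h * Pb act pres lact ract 𝒞 hint hr1 hgr t)
            * Lb act pres lact a := (mul_assoc _ _ _).symm
    | zero => simp
    | add u v _ _ ihu ihv => rw [map_add, mul_add, add_mul, ihu, ihv]
    | smul c u _ ih => rw [map_smul, mul_smul_comm, smul_mul_assoc, ih]
  exact main b (span_top act pres b)

include hl1 hr1 hrmul hlr hgr in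
lemma rho_mul (a b : A) :
    rho act pres lact ract 𝒞 hint hr1 hlr hgr (a * b)
      = rho act pres lact ract 𝒞 hint hr1 hlr hgr b
        * rho act pres lact ract 𝒞 hint hr1 hlr hgr a := by
  have main : ∀ a', a' ∈ Submodule.span k
      {z : A | ∃ (s : S) (g : G), z = pres.ιS s * (pres.ιG g : A)} →
      ∀ b', b' ∈ Submodule.span k
        {z : A | ∃ (s : S) (g : G), z = pres.ιS s * (pres.ιG g : A)} →
      rho act pres lact ract 𝒞 hint hr1 hlr hgr (a' * b')
        = rho act pres lact ract 𝒞 hint hr1 hlr hgr b'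
          * rho act pres lact ract 𝒞 hint hr1 hlr hgr a' := by
    intro a' ha
    induction ha using Submodule.span_induction with
    | mem y hy =>
      intro b' hb
      induction hb using Submodule.span_induction with
      | mem z hz =>
        obtain ⟨s, g, rfl⟩ := hy
        obtain ⟨t, h, rfl⟩ := hz
        exact rho_mul_gen act pres lact ract 𝒞 hint hl1 hr1 hrmul hlr hgr s g t h
      | zero => simp
      | add u v _ _ ihu ihv => rw [mul_add, map_add, map_add, add_mul, ihu, ihv]
      | smul c u _ ih => rw [mul_smul_comm, map_smul, map_smul, smul_mul_assoc, ih]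
    | zero => intro b' _; simp
    | add u v _ _ ihu ihv =>
      intro b' hb
      rw [add_mul, map_add, map_add, mul_add, ihu _ hb, ihv _ hb]
    | smul c u _ ih =>
      intro b' hb
      rw [smul_mul_assoc, map_smul, map_smul, mul_smul_comm, ih _ hb]
  exact main a (span_top act pres a) b (span_top act pres b)

include hr1 hlr hgr in
lemma rho_S (s : S) :
    rho act pres lact ract 𝒞 hint hr1 hlr hgr (pres.ιS s)
      = Pb act pres lact ract 𝒞 hint hr1 hgr s := by
  have h : pres.ιS s = pres.ιS s * ((pres.ιG 1 : Aˣ) : A) := by simp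
  rw [h, rho_gen, relbQ1 act pres lact ract hr1 hlr, one_mul]

include hr1 hlr hgr in
lemma rho_G (h : G) :
    rho act pres lact ract 𝒞 hint hr1 hlr hgr ((pres.ιG h : Aˣ) : A)
      = Qb act pres lact ract hlr h := by
  have h2 : ((pres.ιG h : Aˣ) : A) = pres.ιS 1 * ((pres.ιG h : Aˣ) : A) := by simp
  rw [h2, rho_gen, relbP1, mul_one]

end Main

end S10

/-- for a `kG`-bimodule `C` which is `G`-graded compatibly
(`g (C_h) ℓ = C_{ghℓ}`), the formula `(a ⊗ x)·s = a (g•s) ⊗ x` for `x ∈ C_g`,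
together with the right `kG`-action on the `C`-factor, gives a well-defined
`A`-bimodule structure on `A ⊗_{kG} C` (realized as the quotient of `A ⊗ C`
by the middle `kG`-relations) extending the left `A`-module structure and the
right `kG`-module structure. -/
theorem stmt10 {k S G A C : Type*} [Field k] [Ring S] [Algebra k S]
    [Group G] [Finite G] [DecidableEq G] [Ring A] [Algebra k A]
    [AddCommGroup C] [Module k C]
    (act : G →* S ≃ₐ[k] S) (pres : SkewPresentation k S G A act)
    (lact ract : G → C →ₗ[k] C)
    (hl1 : lact 1 = LinearMap.id) (hlmul : ∀ g h, lact (g * h) = lact g ∘ₗ lact h)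
    (hr1 : ract 1 = LinearMap.id) (hrmul : ∀ g h, ract (g * h) = ract h ∘ₗ ract g)
    (hlr : ∀ (g h : G) (x : C), lact g (ract h x) = ract h (lact g x))
    (𝒞 : G → Submodule k C) (hint : DirectSum.IsInternal 𝒞)
    (hgr : ∀ (g h ℓ : G), ∀ x ∈ 𝒞 h, lact g (ract ℓ x) ∈ 𝒞 (g * h * ℓ)) :
    letI N : Submodule k (A ⊗[k] C) := Submodule.span k
      {z | ∃ (a : A) (g : G) (x : C),
        z = (a * (pres.ιG g : A)) ⊗ₜ[k] x - a ⊗ₜ[k] lact g x}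
    ∃ (L : A →ₐ[k] Module.End k ((A ⊗[k] C) ⧸ N))
      (ρ : A →ₗ[k] Module.End k ((A ⊗[k] C) ⧸ N)),
      -- `ρ` is a right action (an algebra antihomomorphism)
      ρ 1 = 1 ∧ (∀ a b : A, ρ (a * b) = ρ b * ρ a) ∧
      -- `L` extends the left `A`-module structure (multiplication on the left)
      (∀ (b a : A) (x : C), L b (N.mkQ (a ⊗ₜ[k] x)) = N.mkQ ((b * a) ⊗ₜ[k] x)) ∧
      -- the right `S`-action is given by the braiding formula
      (∀ (g : G), ∀ x ∈ 𝒞 g, ∀ (a : A) (s : S),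
        ρ (pres.ιS s) (N.mkQ (a ⊗ₜ[k] x)) =
          N.mkQ ((a * pres.ιS (act g s)) ⊗ₜ[k] x)) ∧
      -- `ρ` extends the right `kG`-module structure
      (∀ (h : G) (a : A) (x : C),
        ρ ((pres.ιG h : Aˣ) : A) (N.mkQ (a ⊗ₜ[k] x)) = N.mkQ (a ⊗ₜ[k] ract h x)) ∧
      -- the two actions commute, so `(A ⊗_{kG} C)` is an `A`-bimodule
      (∀ a b : A, L a * ρ b = ρ b * L a) := by
  letI : Fintype G := Fintype.ofFinite G
  refine ⟨S10.Lhom act pres lact,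
    S10.rho act pres lact ract 𝒞 hint hr1 hlr hgr,
    S10.rho_one act pres lact ract 𝒞 hint hr1 hlr hgr,
    S10.rho_mul act pres lact ract 𝒞 hint hl1 hr1 hrmul hlr hgr,
    ?_, ?_, ?_,
    S10.L_rho_comm act pres lact ract 𝒞 hint hr1 hlr hgr⟩
  · intro b a x
    show S10.Lb act pres lact b ((S10.NN act pres lact).mkQ (a ⊗ₜ[k] x))
      = (S10.NN act pres lact).mkQ ((b * a) ⊗ₜ[k] x)
    rw [S10.Lb_mk]
    rfl
  · intro g x hx a s
    show S10.rho act pres lact ract 𝒞 hint hr1 hlr hgr (pres.ιS s)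
        ((S10.NN act pres lact).mkQ (a ⊗ₜ[k] x))
      = (S10.NN act pres lact).mkQ ((a * pres.ιS (act g s)) ⊗ₜ[k] x)
    rw [S10.rho_S act pres lact ract 𝒞 hint hr1 hlr hgr, S10.Pb_mk,
      S10.P_tmul_of_mem act pres 𝒞 hint s a hx]
  · intro h a x
    show S10.rho act pres lact ract 𝒞 hint hr1 hlr hgr ((pres.ιG h : Aˣ) : A)
        ((S10.NN act pres lact).mkQ (a ⊗ₜ[k] x))
      = (S10.NN act pres lact).mkQ (a ⊗ₜ[k] ract h x)
    rw [S10.rho_G act pres lact ract 𝒞 hint hr1 hlr hgr, S10.Qb_mk]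
    rfl
end

section
/- Let G act on S by automorphisms, A = S#G, and C_i = kG ⊗ C_i' ⊗ kG with C_i' finite dimensional and G-graded with homogeneous basis {x_m}. Then A ⊗_{kG} C_i is a free right A-module with free generating set {g ⊗ x_m ⊗ 1 : g ∈ G, 1 ≤ m ≤ dim C_i'}. -/
open TensorProduct

namespace Finsupp

variable {R S I J : Type*} [Semiring R] [AddCommMonoid S] [Module R S]

noncomputable def domLCongrTwisted (e : I ≃ J) (σ : I → S ≃ₗ[R] S) :
    (I →₀ S) ≃ₗ[R] (J →₀ S) :=
  LinearEquiv.ofLinearMap (lsum ℕ fun i => lsingle (e i) ∘ₗ (σ i).toLinearMap)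
    (lsum ℕ fun j => lsingle (e.symm j) ∘ₗ (σ (e.symm j)).symm.toLinearMap)
    (lhom_ext fun j s => by simp) (lhom_ext fun i s => by simp)

@[simp]
theorem domLCongrTwisted_single (e : I ≃ J) (σ : I → S ≃ₗ[R] S) (i : I) (s : S) :
    domLCongrTwisted e σ (single i s) = single (e i) (σ i s) := by
  simp [domLCongrTwisted]

theorem bijective_of_map_single {M N : Type*} [AddCommMonoid M] [Module R M]
    [AddCommMonoid N] [Module R N] (φ : (I →₀ S) ≃ₗ[R] M) (ψ : (J →₀ S) ≃ₗ[R] N) (e : I ≃ J)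
    (σ : I → S ≃ₗ[R] S) (T : M →ₗ[R] N)
    (hT : ∀ i s, T (φ (single i s)) = ψ (single (e i) (σ i s))) :
    Function.Bijective T := by
  have hTφ : T ∘ₗ φ.toLinearMap = (domLCongrTwisted e σ ≪≫ₗ ψ).toLinearMap :=
    lhom_ext fun i s => by simp [hT]
  have : T = (φ.symm ≪≫ₗ domLCongrTwisted e σ ≪≫ₗ ψ).toLinearMap := by
    ext x
    simpa using congr($hTφ (φ.symm x))
  rw [this]
  exact LinearEquiv.bijective _

end Finsupp

namespace SkewPresentation

variable {k S G A : Type*} [CommSemiring k] [Ring S] [Algebra k S] [Group G] [Ring A]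
  [Algebra k A] {act : G →* S ≃ₐ[k] S} (pres : SkewPresentation k S G A act)

noncomputable def linearEquiv : (G →₀ S) ≃ₗ[k] A :=
  LinearEquiv.ofBijective
    (Finsupp.lsum k fun g => LinearMap.mulRight k (pres.ιG g : A) ∘ₗ pres.ιS.toLinearMap)
    pres.bij

@[simp]
theorem linearEquiv_single (g : G) (s : S) :
    pres.linearEquiv (Finsupp.single g s) = pres.ιS s * pres.ιG g :=
  Finsupp.lsum_single k _ g s

noncomputable def finsuppProdLinearEquiv (ι : Type*) : (ι × G →₀ S) ≃ₗ[k] (ι →₀ A) :=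
  Finsupp.curryLinearEquiv k ≪≫ₗ Finsupp.mapRange.linearEquiv pres.linearEquiv

@[simp]
theorem finsuppProdLinearEquiv_single {ι : Type*} (i : ι) (h : G) (s : S) :
    pres.finsuppProdLinearEquiv ι (Finsupp.single (i, h) s) =
      Finsupp.single i (pres.ιS s * pres.ιG h) := by
  simp only [finsuppProdLinearEquiv, LinearEquiv.trans_apply, Finsupp.curryLinearEquiv_apply,
    Finsupp.curry_single, Finsupp.mapRange.linearEquiv_apply, Finsupp.mapRange_single,
    linearEquiv_single]

theorem apply_tmul_tmul_one {C' : Type*} [AddCommMonoid C'] [Module k C']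
    (ρ : A →ₗ[k] Module.End k (A ⊗[k] (C' ⊗[k] MonoidAlgebra k G)))
    (hρmul : ∀ a b : A, ρ (a * b) = ρ b * ρ a)
    (hρG : ∀ (h : G) (a : A) (x : C') (g : G),
      ρ ((pres.ιG h : Aˣ) : A) (a ⊗ₜ[k] (x ⊗ₜ[k] MonoidAlgebra.of k G g)) =
        a ⊗ₜ[k] (x ⊗ₜ[k] MonoidAlgebra.of k G (g * h)))
    {ℓ : G} {x : C'} (hρS : ∀ (a : A) (g : G) (s : S),
      ρ (pres.ιS s) (a ⊗ₜ[k] (x ⊗ₜ[k] MonoidAlgebra.of k G g)) =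
        (a * pres.ιS (act (ℓ * g) s)) ⊗ₜ[k] (x ⊗ₜ[k] MonoidAlgebra.of k G g))
    (g h : G) (s : S) :
    ρ (pres.ιS s * pres.ιG h) ((pres.ιG g : A) ⊗ₜ[k] (x ⊗ₜ[k] (1 : MonoidAlgebra k G))) =
      (pres.ιS (act (g * ℓ) s) * pres.ιG g) ⊗ₜ[k] (x ⊗ₜ[k] MonoidAlgebra.of k G h) := by
  rw [← map_one (MonoidAlgebra.of k G), hρmul, Module.End.mul_apply, hρS, mul_one, hρG, one_mul,
    pres.comm, map_mul, AlgEquiv.mul_apply]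

end SkewPresentation

theorem stmt12_general {k S G A C' : Type*} [Field k] [Ring S] [Algebra k S]
    [Group G] [Ring A] [Algebra k A]
    [AddCommGroup C'] [Module k C'] {r : ℕ}
    (act : G →* S ≃ₐ[k] S) (pres : SkewPresentation k S G A act)
    (𝒞 : G → Submodule k C')
    (bC : Module.Basis (Fin r) k C') (hhom : ∀ m : Fin r, ∃ h : G, bC m ∈ 𝒞 h)
    -- the right `A`-module structure on `A ⊗ C' ⊗ kG`
    (ρ : A →ₗ[k] Module.End k (A ⊗[k] (C' ⊗[k] MonoidAlgebra k G)))
    (hρmul : ∀ a b : A, ρ (a * b) = ρ b * ρ a)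
    (hρS : ∀ (ℓ : G), ∀ x ∈ 𝒞 ℓ, ∀ (a : A) (g : G) (s : S),
      ρ (pres.ιS s) (a ⊗ₜ[k] (x ⊗ₜ[k] MonoidAlgebra.of k G g)) =
        (a * pres.ιS (act (ℓ * g) s)) ⊗ₜ[k] (x ⊗ₜ[k] MonoidAlgebra.of k G g))
    (hρG : ∀ (h : G) (a : A) (x : C') (g : G),
      ρ ((pres.ιG h : Aˣ) : A) (a ⊗ₜ[k] (x ⊗ₜ[k] MonoidAlgebra.of k G g)) =
        a ⊗ₜ[k] (x ⊗ₜ[k] MonoidAlgebra.of k G (g * h))) :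
    Function.Bijective fun f : (G × Fin r) →₀ A =>
      f.sum fun p a =>
        ρ a (((pres.ιG p.1 : Aˣ) : A) ⊗ₜ[k]
          (bC p.2 ⊗ₜ[k] (1 : MonoidAlgebra k G))) := by
  choose ℓ hℓ using hhom
  let B := Algebra.TensorProduct.basis A (bC.tensorProduct (MonoidAlgebra.basis G k))
  let ψ : ((Fin r × G) × G →₀ S) ≃ₗ[k] A ⊗[k] (C' ⊗[k] MonoidAlgebra k G) :=
    pres.finsuppProdLinearEquiv _ ≪≫ₗ B.repr.symm.restrictScalars k
  let e : (G × Fin r) × G ≃ (Fin r × G) × G :=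
    { toFun := fun i => ((i.1.2, i.2), i.1.1)
      invFun := fun j => ((j.2, j.1.1), j.1.2)
      left_inv := fun _ => rfl
      right_inv := fun _ => rfl }
  let T := Finsupp.lsum k fun p : G × Fin r =>
    LinearMap.applyₗ ((pres.ιG p.1 : A) ⊗ₜ[k] (bC p.2 ⊗ₜ[k] (1 : MonoidAlgebra k G))) ∘ₗ ρ
  refine Finsupp.bijective_of_map_single (pres.finsuppProdLinearEquiv _) ψ e
    (fun i => (act (i.1.1 * ℓ i.1.2)).toLinearEquiv) T fun ⟨⟨g, m⟩, h⟩ s => ?_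
  have hψ : ψ (Finsupp.single ((m, h), g) (act (g * ℓ m) s)) =
      (pres.ιS (act (g * ℓ m) s) * pres.ιG g) ⊗ₜ[k] (bC m ⊗ₜ[k] MonoidAlgebra.of k G h) := by
    simp only [ψ, LinearEquiv.trans_apply, pres.finsuppProdLinearEquiv_single,
      LinearEquiv.restrictScalars_apply, B, Algebra.TensorProduct.basis_repr_symm_apply,
      Module.Basis.repr_symm_single_one, Module.Basis.tensorProduct_apply,
      MonoidAlgebra.basis_apply, MonoidAlgebra.of_apply]
  rw [pres.finsuppProdLinearEquiv_single, Finsupp.lsum_single]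
  exact (pres.apply_tmul_tmul_one ρ hρmul hρG (hρS _ _ (hℓ m)) g h s).trans hψ.symm

/-- with `C_i = kG ⊗ C' ⊗ kG`, `C'` finite dimensional and
`G`-graded with homogeneous basis `{x_m}`, the right `A`-module
`A ⊗_{kG} C_i ≅ A ⊗ C' ⊗ kG` (with the braided right action) is free with
free generating set `{g ⊗ x_m ⊗ 1 : g ∈ G, m}`; i.e. the map
`((g,m) ↦ a_{g,m}) ↦ Σ (g ⊗ x_m ⊗ 1)·a_{g,m}` is bijective. -/
theorem stmt12 {k S G A C' : Type*} [Field k] [Ring S] [Algebra k S]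
    [Group G] [Finite G] [DecidableEq G] [Ring A] [Algebra k A]
    [AddCommGroup C'] [Module k C'] {r : ℕ}
    (act : G →* S ≃ₐ[k] S) (pres : SkewPresentation k S G A act)
    (𝒞 : G → Submodule k C') (hint : DirectSum.IsInternal 𝒞)
    (bC : Module.Basis (Fin r) k C') (hhom : ∀ m : Fin r, ∃ h : G, bC m ∈ 𝒞 h)
    -- the right `A`-module structure on `A ⊗ C' ⊗ kG`
    (ρ : A →ₗ[k] Module.End k (A ⊗[k] (C' ⊗[k] MonoidAlgebra k G)))
    (hρone : ρ 1 = 1) (hρmul : ∀ a b : A, ρ (a * b) = ρ b * ρ a)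
    (hρS : ∀ (ℓ : G), ∀ x ∈ 𝒞 ℓ, ∀ (a : A) (g : G) (s : S),
      ρ (pres.ιS s) (a ⊗ₜ[k] (x ⊗ₜ[k] MonoidAlgebra.of k G g)) =
        (a * pres.ιS (act (ℓ * g) s)) ⊗ₜ[k] (x ⊗ₜ[k] MonoidAlgebra.of k G g))
    (hρG : ∀ (h : G) (a : A) (x : C') (g : G),
      ρ ((pres.ιG h : Aˣ) : A) (a ⊗ₜ[k] (x ⊗ₜ[k] MonoidAlgebra.of k G g)) =
        a ⊗ₜ[k] (x ⊗ₜ[k] MonoidAlgebra.of k G (g * h))) :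
    Function.Bijective fun f : (G × Fin r) →₀ A =>
      f.sum fun p a =>
        ρ a (((pres.ιG p.1 : Aˣ) : A) ⊗ₜ[k]
          (bC p.2 ⊗ₜ[k] (1 : MonoidAlgebra k G))) :=
  stmt12_general act pres 𝒞 bC hhom ρ hρmul hρS hρG
end

section
/- Let G act linearly on V and let κ : V ⊗ V → kG ⊕ (V ⊗ kG) be an alternating bilinear map. The extension of κ to a map on U ⊗_{kG} U, U = V ⊗ kG, defined by κ((v₁⊗g₁) ⊗_{kG} (v₂⊗g₂)) = κ(v₁, g₁·v₂)·g₁g₂, is a well-defined kG-bimodule homomorphism if and only if κ is G-invariant, i.e. g·κ(g⁻¹·u, g⁻¹·v) = κ(u,v) for all u,v ∈ V, g ∈ G (where G acts on kG-valued components by conjugation and on V-valued components by the linear action combined with conjugation). -/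
namespace TensorAlgebra

variable {R M N : Type*} [CommSemiring R] [AddCommMonoid M] [Module R M]
  [AddCommMonoid N] [Module R N]

theorem linearMap_ext_tprod {f g : TensorAlgebra R M →ₗ[R] N}
    (h : ∀ n (m : Fin n → M), f (tprod R M n m) = g (tprod R M n m)) : f = g := by
  have key : f ∘ₗ ofDirectSum.toLinearMap = g ∘ₗ ofDirectSum.toLinearMap := by
    ext n m
    simpa [DirectSum.lof_eq_of] using h n m
  ext x
  rw [← ofDirectSum_toDirectSum x]
  exact congr($key (toDirectSum x))

theorem map_tprod_of_ι {F : Type*} [FunLike F (TensorAlgebra R M) (TensorAlgebra R M)]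
    [AlgHomClass F R _ _] (φ : F) (f : M → M) (hφ : ∀ v, φ (ι R v) = ι R (f v))
    {n : ℕ} (m : Fin n → M) : φ (tprod R M n m) = tprod R M n (f ∘ m) := by
  simp [tprod_apply, map_list_prod, List.map_ofFn, Function.comp_def, hφ]

noncomputable def degreeTwoLift (β : M →ₗ[R] M →ₗ[R] N) : TensorAlgebra R M →ₗ[R] N :=
  PiTensorProduct.lift (LinearMap.uncurryLeft
      ((MultilinearMap.ofSubsingletonₗ R R M N (0 : Fin 1)).toLinearMap ∘ₗ β)) ∘ₗ
    DirectSum.component R ℕ (fun n => TensorPower R n M) 2 ∘ₗ toDirectSum.toLinearMap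

variable (β : M →ₗ[R] M →ₗ[R] N)

theorem degreeTwoLift_tprod_two (m : Fin 2 → M) :
    degreeTwoLift β (tprod R M 2 m) = β (m 0) (m 1) := by
  rw [degreeTwoLift, LinearMap.comp_apply, LinearMap.comp_apply, AlgHom.toLinearMap_apply,
    toDirectSum_tensorPower_tprod, ← DirectSum.lof_eq_of R, DirectSum.component.lof_self,
    PiTensorProduct.lift.tprod]
  rfl

theorem degreeTwoLift_tprod_of_ne {n : ℕ} (hn : n ≠ 2) (m : Fin n → M) :
    degreeTwoLift β (tprod R M n m) = 0 := by
  rw [degreeTwoLift, LinearMap.comp_apply, LinearMap.comp_apply, AlgHom.toLinearMap_apply,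
    toDirectSum_tensorPower_tprod, ← DirectSum.lof_eq_of R, DirectSum.component.of,
    dif_neg hn, map_zero]

theorem degreeTwoLift_ι_mul_ι (u v : M) : degreeTwoLift β (ι R u * ι R v) = β u v := by
  simpa [tprod_apply, List.ofFn_succ] using degreeTwoLift_tprod_two β ![u, v]

theorem degreeTwoLift_apply_of_ι {N' F : Type*} [AddCommMonoid N'] [Module R N']
    [FunLike F (TensorAlgebra R M) (TensorAlgebra R M)] [AlgHomClass F R _ _]
    (φ : F) (f : M → M) (hφ : ∀ v, φ (ι R v) = ι R (f v))
    (T : N →ₗ[R] N') (β' : M →ₗ[R] M →ₗ[R] N') (hβ : ∀ u v, β' (f u) (f v) = T (β u v))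
    (s : TensorAlgebra R M) : degreeTwoLift β' (φ s) = T (degreeTwoLift β s) := by
  suffices degreeTwoLift β' ∘ₗ (AlgHomClass.toAlgHom φ).toLinearMap =
      T ∘ₗ degreeTwoLift β from congr($this s)
  refine linearMap_ext_tprod fun n m => ?_
  simp only [LinearMap.comp_apply, AlgHom.toLinearMap_apply, AlgHom.coe_coe,
    map_tprod_of_ι φ f hφ]
  obtain rfl | hn := eq_or_ne n 2
  · rw [degreeTwoLift_tprod_two, degreeTwoLift_tprod_two, Function.comp_apply,
      Function.comp_apply, hβ]
  · rw [degreeTwoLift_tprod_of_ne _ hn, degreeTwoLift_tprod_of_ne _ hn, map_zero]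

end TensorAlgebra

namespace SkewPresentation

variable {k S G A : Type*} [CommSemiring k] [Ring S] [Algebra k S] [Group G] [Ring A]
  [Algebra k A] {act : G →* S ≃ₐ[k] S} (P : SkewPresentation k S G A act)

noncomputable def equiv : (G →₀ S) ≃ₗ[k] A :=
  LinearEquiv.ofBijective
    (Finsupp.lsum k fun g => LinearMap.mulRight k (P.ιG g : A) ∘ₗ P.ιS.toLinearMap)
    (by rw [Finsupp.coe_lsum]; exact P.bij)

theorem equiv_single (g : G) (s : S) : P.equiv (Finsupp.single g s) = P.ιS s * P.ιG g := by
  rw [equiv, LinearEquiv.ofBijective_apply, Finsupp.lsum_single]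
  rfl

@[elab_as_elim]
theorem induction_on {p : A → Prop} (x : A) (add : ∀ x y, p x → p y → p (x + y))
    (ιS_mul_ιG : ∀ s g, p (P.ιS s * P.ιG g)) : p x := by
  obtain ⟨f, rfl⟩ := P.equiv.surjective x
  induction f using Finsupp.induction_linear with
  | zero => simpa using ιS_mul_ιG 0 1
  | add f₁ f₂ h₁ h₂ => simpa using add _ _ h₁ h₂
  | single g s => simpa [equiv_single] using ιS_mul_ιG s g

noncomputable def extend (K₀ : S →ₗ[k] A) : A →ₗ[k] A :=
  Finsupp.lsum k (fun g => LinearMap.mulRight k (P.ιG g : A) ∘ₗ K₀) ∘ₗ P.equiv.symm.toLinearMap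

variable (K₀ : S →ₗ[k] A)

theorem extend_ιS_mul_ιG (s : S) (g : G) : P.extend K₀ (P.ιS s * P.ιG g) = K₀ s * P.ιG g := by
  rw [← equiv_single, extend, LinearMap.comp_apply, LinearEquiv.coe_toLinearMap,
    LinearEquiv.symm_apply_apply, Finsupp.lsum_single]
  rfl

theorem extend_mul_ιG (g : G) (x : A) : P.extend K₀ (x * P.ιG g) = P.extend K₀ x * P.ιG g := by
  induction x using P.induction_on with
  | add x y hx hy => rw [add_mul, map_add, map_add, hx, hy, add_mul]
  | ιS_mul_ιG s h =>
    rw [mul_assoc, ← Units.val_mul, ← map_mul, extend_ιS_mul_ιG, extend_ιS_mul_ιG, map_mul,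
      Units.val_mul, mul_assoc]

theorem ιG_mul_extend (hK₀ : ∀ g s, K₀ (act g s) = P.ιG g * K₀ s * ↑(P.ιG g)⁻¹) (g : G) (x : A) :
    P.extend K₀ (P.ιG g * x) = P.ιG g * P.extend K₀ x := by
  induction x using P.induction_on with
  | add x y hx hy => rw [mul_add, map_add, map_add, hx, hy, mul_add]
  | ιS_mul_ιG s h =>
    rw [← mul_assoc, P.comm, mul_assoc, ← Units.val_mul, ← map_mul, extend_ιS_mul_ιG,
      extend_ιS_mul_ιG, hK₀, map_mul, Units.val_mul, ← mul_assoc, Units.inv_mul_cancel_right,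
      mul_assoc]

end SkewPresentation

theorem stmt17_general {k V G A : Type*} [Field k] [AddCommGroup V] [Module k V]
    [Group G] [Ring A] [Algebra k A]
    (act : G →* V ≃ₗ[k] V)
    (actT : G →* TensorAlgebra k V ≃ₐ[k] TensorAlgebra k V)
    (hactT : ∀ (g : G) (v : V),
      actT g (TensorAlgebra.ι k v) = TensorAlgebra.ι k (act g v))
    (pres : SkewPresentation k (TensorAlgebra k V) G A actT)
    (κ : V →ₗ[k] V →ₗ[k] A) :
    -- the extension is a well-defined `kG`-bimodule homomorphism ↔ `κ` is `G`-invariant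
    ((∃ K : A →ₗ[k] A,
        (∀ (v₁ v₂ : V) (g : G),
          K (pres.ιS (TensorAlgebra.ι k v₁ * TensorAlgebra.ι k v₂) *
              ((pres.ιG g : Aˣ) : A)) = κ v₁ v₂ * ((pres.ιG g : Aˣ) : A)) ∧
        (∀ (g : G) (x : A),
          K (((pres.ιG g : Aˣ) : A) * x) = ((pres.ιG g : Aˣ) : A) * K x) ∧
        (∀ (g : G) (x : A),
          K (x * ((pres.ιG g : Aˣ) : A)) = K x * ((pres.ιG g : Aˣ) : A))) ↔
      (∀ (g : G) (u v : V),
        ((pres.ιG g : Aˣ) : A) * κ u v * (((pres.ιG g)⁻¹ : Aˣ) : A) =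
          κ (act g u) (act g v))) := by
  constructor
  · rintro ⟨K, hK, hK_left, -⟩ g u v
    have hK_one (u v : V) : K (pres.ιS (TensorAlgebra.ι k u * TensorAlgebra.ι k v)) = κ u v := by
      simpa using hK u v 1
    rw [Units.mul_inv_eq_iff_eq_mul, ← hK_one, ← hK_left, pres.comm, map_mul (actT g), hactT,
      hactT, hK]
  · intro hinv
    set K₀ := TensorAlgebra.degreeTwoLift κ
    have hequivariant (g : G) (s : TensorAlgebra k V) :
        K₀ (actT g s) = pres.ιG g * K₀ s * ↑(pres.ιG g)⁻¹ :=
      TensorAlgebra.degreeTwoLift_apply_of_ι κ (actT g) (act g) (hactT g)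
        (LinearMap.mulRight k _ ∘ₗ LinearMap.mulLeft k _) κ (fun u v => (hinv g u v).symm) s
    refine ⟨pres.extend K₀, fun v₁ v₂ g => ?_, pres.ιG_mul_extend K₀ hequivariant,
      pres.extend_mul_ιG K₀⟩
    rw [pres.extend_ιS_mul_ιG, TensorAlgebra.degreeTwoLift_ι_mul_ι]

/-- for an alternating bilinear `κ : V ⊗ V → kG ⊕ (V ⊗ kG)`
(taking values in the filtered-degree-one part of `A = T_k(V)#G`), the
extension of `κ` to `U ⊗_{kG} U` (`U = V ⊗ kG`) given by
`κ((v₁⊗g₁) ⊗ (v₂⊗g₂)) = κ(v₁, g₁·v₂)·g₁g₂` is a well-defined `kG`-bimodule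
homomorphism if and only if `κ` is `G`-invariant:
`g·κ(u,v)·g⁻¹ = κ(g·u, g·v)` for all `u, v ∈ V`, `g ∈ G`. -/
theorem stmt17 {k V G A : Type*} [Field k] [AddCommGroup V] [Module k V]
    [Module.Finite k V] [Group G] [Finite G] [Ring A] [Algebra k A]
    (act : G →* V ≃ₗ[k] V)
    (actT : G →* TensorAlgebra k V ≃ₐ[k] TensorAlgebra k V)
    (hactT : ∀ (g : G) (v : V),
      actT g (TensorAlgebra.ι k v) = TensorAlgebra.ι k (act g v))
    (pres : SkewPresentation k (TensorAlgebra k V) G A actT)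
    (κ : V →ₗ[k] V →ₗ[k] A)
    (hκalt : ∀ v : V, κ v v = 0)
    -- `κ` takes values in `kG ⊕ (V ⊗ kG)`, the filtered degree-one part of `A`
    (hκval : ∀ u v : V, κ u v ∈ Submodule.span k
      ({y | ∃ g : G, y = ((pres.ιG g : Aˣ) : A)} ∪
       {y | ∃ (w : V) (g : G),
         y = pres.ιS (TensorAlgebra.ι k w) * ((pres.ιG g : Aˣ) : A)})) :
    -- the extension is a well-defined `kG`-bimodule homomorphism ↔ `κ` is `G`-invariant
    ((∃ K : A →ₗ[k] A,
        (∀ (v₁ v₂ : V) (g : G),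
          K (pres.ιS (TensorAlgebra.ι k v₁ * TensorAlgebra.ι k v₂) *
              ((pres.ιG g : Aˣ) : A)) = κ v₁ v₂ * ((pres.ιG g : Aˣ) : A)) ∧
        (∀ (g : G) (x : A),
          K (((pres.ιG g : Aˣ) : A) * x) = ((pres.ιG g : Aˣ) : A) * K x) ∧
        (∀ (g : G) (x : A),
          K (x * ((pres.ιG g : Aˣ) : A)) = K x * ((pres.ιG g : Aˣ) : A))) ↔
      (∀ (g : G) (u v : V),
        ((pres.ιG g : Aˣ) : A) * κ u v * (((pres.ιG g)⁻¹ : Aˣ) : A) =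
          κ (act g u) (act g v))) :=
  stmt17_general act actT hactT pres κ
end

section
/- Let G be a finite group acting linearly on V over k with char k ≠ 2, and κ : V⊗V → kG an alternating bilinear map, κ(v₁,v₂) = Σ_g κ_g(v₁,v₂) g. If the quotient H_κ = T_k(V)#G / ⟨v₁⊗v₂ − v₂⊗v₁ − κ(v₁,v₂)⟩ satisfies the PBW property (gr H_κ ≅ S_k(V)#G), then κ is G-invariant and Σ_{σ ∈ Alt₃} κ_g(v_{σ(2)}, v_{σ(3)}) · (g·v_{σ(1)} − v_{σ(1)}) = 0 in V for all v₁,v₂,v₃ ∈ V and g ∈ G. -/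
open MonoidAlgebra

section GroupAlgebra

variable {k G : Type*} [Group G]

theorem MonoidAlgebra.coeff_conj_eq_of_of_mul_eq [Semiring k] {g : G} {x y : MonoidAlgebra k G}
    (h : of k G g * x = y * of k G g) (h' : G) : y.coeff (g * h' * g⁻¹) = x.coeff h' := by
  simpa using congr(($h).coeff (g * h')).symm

variable [CommSemiring k] {M : Type*} [AddCommMonoid M] [Module k M]

theorem MonoidAlgebra.injective_of_linearIndependent_of (f : MonoidAlgebra k G →ₗ[k] M)
    (hf : LinearIndependent k fun g => f (of k G g)) : Function.Injective f := by
  have := (basis G k).injective_constr_of_linearIndependent (R₂ := k)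
    (v := fun g => f (basis G k g)) (by simpa using hf)
  rwa [Module.Basis.constr_self] at this

theorem MonoidAlgebra.linearMap_apply_eq_sum [Fintype G] {F : Type*}
    [FunLike F (MonoidAlgebra k G) M] [LinearMapClass F k (MonoidAlgebra k G) M]
    (f : F) (x : MonoidAlgebra k G) : f x = ∑ w, x.coeff w • f (of k G w) := by
  conv_lhs => rw [← (basis G k).sum_repr x]
  simp only [map_sum, map_smul, basis_apply, of_apply]
  rfl

end GroupAlgebra

theorem List.prod_map_pow_piSingle_one {α M : Type*} [DecidableEq α] [Monoid M] {l : List α}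
    (hl : l.Nodup) {i : α} (hi : i ∈ l) (x : α → M) :
    (l.map fun j => x j ^ Pi.single (M := fun _ => ℕ) i 1 j).prod = x i := by
  rw [List.prod_map_eq_pow_single i _ fun j hj _ => by simp [Pi.single_eq_of_ne hj],
    List.count_eq_one_of_mem hl hi, pow_one, Pi.single_eq_same, pow_one]

theorem Module.Basis.eq_zero_of_sum_mul_eq_zero {k V G H ι : Type*} [CommRing k]
    [AddCommGroup V] [Module k V] [Ring H] [Algebra k H] [Fintype ι] [Fintype G]
    (b : Module.Basis ι k V) (X : V →ₗ[k] H) (Γ : G → H)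
    (hind : LinearIndependent k fun p : ι × G => X (b p.1) * Γ p.2)
    {c : G → V} (hc : ∑ w, X (c w) * Γ w = 0) (w : G) : c w = 0 := by
  have hexpand : ∑ p : ι × G, b.repr (c p.2) p.1 • (X (b p.1) * Γ p.2) = 0 := by
    rw [← hc, Fintype.sum_prod_type_right]
    refine Finset.sum_congr rfl fun w _ => ?_
    conv_rhs => rw [← b.sum_repr (c w)]
    simp only [map_sum, map_smul, Finset.sum_mul, smul_mul_assoc]
  exact b.repr.map_eq_zero_iff.mp <| Finsupp.ext fun i =>
    Fintype.linearIndependent_iff.mp hind _ hexpand (i, w)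

namespace DrinfeldHecke

variable {k V G H : Type*} [CommRing k] [AddCommGroup V] [Module k V] [Group G] [Ring H]
  [Algebra k H] {act : G →* V ≃ₗ[k] V} {X : V →ₗ[k] H} {T : MonoidAlgebra k G →ₐ[k] H}
  {κ : V →ₗ[k] V →ₗ[k] MonoidAlgebra k G}

theorem coeff_conj_invariant (hT : Function.Injective T)
    (hskew : ∀ g v, T (of k G g) * X v = X (act g v) * T (of k G g))
    (hcommutator : ∀ u v, X u * X v - X v * X u = T (κ u v)) (g h : G) (u v : V) :
    (κ (act g u) (act g v)).coeff (g * h * g⁻¹) = (κ u v).coeff h := by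
  refine coeff_conj_eq_of_of_mul_eq (hT ?_) h
  have hconj (a c : V) :
      T (of k G g) * (X a * X c) = X (act g a) * X (act g c) * T (of k G g) := by
    rw [← mul_assoc, hskew, mul_assoc, hskew, ← mul_assoc]
  rw [map_mul, map_mul, ← hcommutator, ← hcommutator, mul_sub, sub_mul, hconj, hconj]

theorem commutator_eq_sum [Fintype G]
    (hskew : ∀ g v, T (of k G g) * X v = X (act g v) * T (of k G g)) (x : MonoidAlgebra k G)
    (a : V) : T x * X a - X a * T x = ∑ w, X (x.coeff w • (act w a - a)) * T (of k G w) := by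
  rw [linearMap_apply_eq_sum T x, Finset.sum_mul, Finset.mul_sum, ← Finset.sum_sub_distrib]
  refine Finset.sum_congr rfl fun w _ => ?_
  simp only [smul_mul_assoc, hskew, mul_smul_comm, map_smul, map_sub, sub_mul, smul_sub]

theorem mixed_jacobi [Fintype G] {ι : Type*} [Fintype ι] (b : Module.Basis ι k V)
    (hskew : ∀ g v, T (of k G g) * X v = X (act g v) * T (of k G g))
    (hcommutator : ∀ u v, X u * X v - X v * X u = T (κ u v))
    (hind : LinearIndependent k fun p : ι × G => X (b p.1) * T (of k G p.2))
    (g : G) (v₁ v₂ v₃ : V) :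
    (κ v₂ v₃).coeff g • (act g v₁ - v₁) + (κ v₃ v₁).coeff g • (act g v₂ - v₂) +
      (κ v₁ v₂).coeff g • (act g v₃ - v₃) = 0 := by
  have jacobi : (T (κ v₂ v₃) * X v₁ - X v₁ * T (κ v₂ v₃)) +
      (T (κ v₃ v₁) * X v₂ - X v₂ * T (κ v₃ v₁)) +
      (T (κ v₁ v₂) * X v₃ - X v₃ * T (κ v₁ v₂)) = 0 := by
    simp only [← hcommutator]
    noncomm_ring
  simp only [commutator_eq_sum hskew, ← Finset.sum_add_distrib, ← add_mul, ← map_add] at jacobi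
  exact b.eq_zero_of_sum_mul_eq_zero X _ hind jacobi g

end DrinfeldHecke

theorem stmt18_general {k V G A : Type*} [Field k] [AddCommGroup V] [Module k V]
    [Group G] [Finite G] [Ring A] [Algebra k A] {d : ℕ}
    (b : Module.Basis (Fin d) k V)
    (act : G →* V ≃ₗ[k] V)
    (actT : G →* TensorAlgebra k V ≃ₐ[k] TensorAlgebra k V)
    (hactT : ∀ (g : G) (v : V),
      actT g (TensorAlgebra.ι k v) = TensorAlgebra.ι k (act g v))
    (pres : SkewPresentation k (TensorAlgebra k V) G A actT)
    (κ : V →ₗ[k] V →ₗ[k] MonoidAlgebra k G)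
    -- the embedding of `kG` into `A`
    (ιKG : MonoidAlgebra k G →ₐ[k] A)
    (hιKG : ∀ g : G, ιKG (MonoidAlgebra.of k G g) = ((pres.ιG g : Aˣ) : A))
    -- the defining relations of `H_κ`
    (rel : A → A → Prop)
    (hrel : rel = fun x y => ∃ v₁ v₂ : V,
      x = pres.ιS (TensorAlgebra.ι k v₁) * pres.ιS (TensorAlgebra.ι k v₂) ∧
      y = pres.ιS (TensorAlgebra.ι k v₂) * pres.ιS (TensorAlgebra.ι k v₁) +
            ιKG (κ v₁ v₂))
    -- the PBW property: the PBW monomials `x₁^{a₁} ⋯ x_d^{a_d} · g` form a basis of `H_κ`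
    (hPBW :
      LinearIndependent k (fun p : (Fin d → ℕ) × G =>
        (((List.finRange d).map fun i =>
            (RingQuot.mkAlgHom k rel) (pres.ιS (TensorAlgebra.ι k (b i))) ^ p.1 i).prod) *
          (RingQuot.mkAlgHom k rel) ((pres.ιG p.2 : Aˣ) : A)) ∧
      Submodule.span k (Set.range (fun p : (Fin d → ℕ) × G =>
        (((List.finRange d).map fun i =>
            (RingQuot.mkAlgHom k rel) (pres.ιS (TensorAlgebra.ι k (b i))) ^ p.1 i).prod) *
          (RingQuot.mkAlgHom k rel) ((pres.ιG p.2 : Aˣ) : A))) = ⊤) :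
    -- `κ` is `G`-invariant …
    (∀ (g h : G) (u v : V), (κ (act g u) (act g v)).coeff (g * h * g⁻¹) = (κ u v).coeff h) ∧
    -- … and the mixed Jacobi condition holds
    (∀ (g : G) (v₁ v₂ v₃ : V),
      (κ v₂ v₃).coeff g • (act g v₁ - v₁) +
        (κ v₃ v₁).coeff g • (act g v₂ - v₂) +
        (κ v₁ v₂).coeff g • (act g v₃ - v₃) = 0) := by
  classical
  cases nonempty_fintype G
  set π := RingQuot.mkAlgHom k rel
  let X : V →ₗ[k] RingQuot rel := (π.comp pres.ιS).toLinearMap ∘ₗ TensorAlgebra.ι k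
  let T : MonoidAlgebra k G →ₐ[k] RingQuot rel := π.comp ιKG
  have hTof (g : G) : T (of k G g) = π (pres.ιG g : A) := congrArg π (hιKG g)
  have hskew (g : G) (v : V) : T (of k G g) * X v = X (act g v) * T (of k G g) := by
    simp only [hTof, X, LinearMap.comp_apply, AlgHom.toLinearMap_apply, AlgHom.comp_apply,
      ← map_mul, pres.comm, hactT]
  have hcommutator (u v : V) : X u * X v - X v * X u = T (κ u v) := by
    have h := RingQuot.mkAlgHom_rel k (by rw [hrel]; exact ⟨u, v, rfl, rfl⟩ : rel _ _)
    simp only [map_mul, map_add] at h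
    exact sub_eq_of_eq_add' h
  have hindT : LinearIndependent k fun g => T (of k G g) := by
    convert hPBW.1.comp _ (Prod.mk_right_injective 0) using 1
    funext g
    rw [hTof]
    simp
  have hindXT : LinearIndependent k fun p : Fin d × G => X (b p.1) * T (of k G p.2) := by
    have hsingle : Function.Injective
        (Prod.map (fun i : Fin d => Pi.single (M := fun _ => ℕ) i 1) (id : G → G)) :=
      Function.Injective.prodMap (fun i j hij => by simpa [Pi.single_apply] using congrFun hij i)
        Function.injective_id
    convert hPBW.1.comp _ hsingle using 1
    funext p
    rw [hTof]
    simp [X, List.prod_map_pow_piSingle_one (List.nodup_finRange d)]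
  exact ⟨DrinfeldHecke.coeff_conj_invariant
      (injective_of_linearIndependent_of T.toLinearMap hindT) hskew hcommutator,
    DrinfeldHecke.mixed_jacobi b hskew hcommutator hindXT⟩

/-- let `char k ≠ 2`, `G` finite acting linearly on `V` (finite
dimensional, with basis `b`), and `κ : V⊗V → kG` alternating bilinear with
components `κ_g(v₁,v₂) = (κ v₁ v₂) g`.  Form the Drinfeld Hecke algebra
`H_κ = T_k(V)#G / ⟨v₁⊗v₂ − v₂⊗v₁ − κ(v₁,v₂)⟩` (as a `RingQuot`).  If `H_κ`
has the PBW property — the PBW monomials `x^a · g` form a `k`-basis of `H_κ`,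
equivalently `gr H_κ ≅ S_k(V)#G` — then `κ` is `G`-invariant
(`κ_{ghg⁻¹}(g·u, g·v) = κ_h(u,v)`) and the mixed Jacobi identity
`Σ_{σ∈Alt₃} κ_g(v_{σ(2)},v_{σ(3)})·(g·v_{σ(1)} − v_{σ(1)}) = 0` holds. -/
theorem stmt18 {k V G A : Type*} [Field k] [AddCommGroup V] [Module k V]
    [Group G] [Finite G] [Ring A] [Algebra k A] {d : ℕ}
    (hchar : (2 : k) ≠ 0)
    (b : Module.Basis (Fin d) k V)
    (act : G →* V ≃ₗ[k] V)
    (actT : G →* TensorAlgebra k V ≃ₐ[k] TensorAlgebra k V)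
    (hactT : ∀ (g : G) (v : V),
      actT g (TensorAlgebra.ι k v) = TensorAlgebra.ι k (act g v))
    (pres : SkewPresentation k (TensorAlgebra k V) G A actT)
    (κ : V →ₗ[k] V →ₗ[k] MonoidAlgebra k G)
    (hκalt : ∀ v : V, κ v v = 0)
    -- the embedding of `kG` into `A`
    (ιKG : MonoidAlgebra k G →ₐ[k] A)
    (hιKG : ∀ g : G, ιKG (MonoidAlgebra.of k G g) = ((pres.ιG g : Aˣ) : A))
    -- the defining relations of `H_κ`
    (rel : A → A → Prop)
    (hrel : rel = fun x y => ∃ v₁ v₂ : V,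
      x = pres.ιS (TensorAlgebra.ι k v₁) * pres.ιS (TensorAlgebra.ι k v₂) ∧
      y = pres.ιS (TensorAlgebra.ι k v₂) * pres.ιS (TensorAlgebra.ι k v₁) +
            ιKG (κ v₁ v₂))
    -- the PBW property: the PBW monomials `x₁^{a₁} ⋯ x_d^{a_d} · g` form a basis of `H_κ`
    (hPBW :
      LinearIndependent k (fun p : (Fin d → ℕ) × G =>
        (((List.finRange d).map fun i =>
            (RingQuot.mkAlgHom k rel) (pres.ιS (TensorAlgebra.ι k (b i))) ^ p.1 i).prod) *
          (RingQuot.mkAlgHom k rel) ((pres.ιG p.2 : Aˣ) : A)) ∧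
      Submodule.span k (Set.range (fun p : (Fin d → ℕ) × G =>
        (((List.finRange d).map fun i =>
            (RingQuot.mkAlgHom k rel) (pres.ιS (TensorAlgebra.ι k (b i))) ^ p.1 i).prod) *
          (RingQuot.mkAlgHom k rel) ((pres.ιG p.2 : Aˣ) : A))) = ⊤) :
    -- `κ` is `G`-invariant …
    (∀ (g h : G) (u v : V), (κ (act g u) (act g v)).coeff (g * h * g⁻¹) = (κ u v).coeff h) ∧
    -- … and the mixed Jacobi condition holds
    (∀ (g : G) (v₁ v₂ v₃ : V),
      (κ v₂ v₃).coeff g • (act g v₁ - v₁) +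
        (κ v₃ v₁).coeff g • (act g v₂ - v₂) +
        (κ v₁ v₂).coeff g • (act g v₃ - v₃) = 0) :=
  stmt18_general b act actT hactT pres κ ιKG hιKG rel hrel hPBW
end
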